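/- arXiv:1112.4757 — 8 statements merged into one kernel-verified Lean document; each statement's English description precedes it below -/
import Mathlib

section
/- Let K, L be convex bodies in ℝⁿ with M(K,L) = |K ∩ (-L)|. For every 0 ≤ θ₀ ≤ θ < 1, (1 - θ^{1/n})·(K +_{θ₀} L) ⊆ (1 - θ₀^{1/n})·(K +_θ L). -/
/-!
For `x ∈ K + L` write `S x = K ∩ (x - L)`. Sections over a convex combination contain the
corresponding Minkowski combination of sections, so by the Brunn–Minkowski inequality
`x ↦ |S x|^{1/n}` is concave on `K + L`. Put `a₀ = θ₀^{1/n}`, `a = θ^{1/n}` and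
`λ = (1 - a) / (1 - a₀)`, so that `λ a₀ + (1 - λ) = a`. The section `S 0` has the maximal volume
`M`, so concavity along the segment from `0` to `x ∈ K +_{θ₀} L` gives
`|S (λ x)|^{1/n} ≥ λ a₀ M^{1/n} + (1 - λ) M^{1/n} = a M^{1/n}`, i.e. `λ x ∈ K +_θ L`; and
`(1 - a) x = (1 - a₀) (λ x)`.

The Brunn–Minkowski inequality is proved in its multiplicative form
`|A|^λ |B|^{1-λ} ≤ |λ A + (1 - λ) B|` by induction on the dimension: Fubini reduces it to the
one-dimensional Prékopa–Leindler inequality for the volumes of slices, which follows from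
`|C| + |D| ≤ |C + D|` on the real line applied to superlevel sets. Linear isomorphisms carry it
to every Haar measure, and rescaling `A` and `B` to unit volume gives the additive form.
-/

open MeasureTheory Set
open scoped Pointwise

/-- The `θ`-convolution body of `K` and `L`. -/
noncomputable def convBody (n : ℕ) (θ : ℝ) (K L : Set (EuclideanSpace ℝ (Fin n))) :
    Set (EuclideanSpace ℝ (Fin n)) :=
  {x ∈ K + L |
    ENNReal.ofReal θ * (⨆ z : EuclideanSpace ℝ (Fin n), volume (K ∩ ({z} - L))) ≤
      volume (K ∩ ({x} - L))}

open Module Measure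
open scoped ENNReal

theorem Real.volume_add_volume_le_volume_add_of_isCompact {C D : Set ℝ} (hC : IsCompact C)
    (hD : IsCompact D) (hC₀ : C.Nonempty) (hD₀ : D.Nonempty) :
    volume C + volume D ≤ volume (C + D) := by
  -- `C + max D` and `min C + D` lie in `C + D` and overlap only in `min C + max D`.
  have hU : C + {sSup D} ⊆ C + D := add_subset_add_left (singleton_subset_iff.2 (hD.sSup_mem hD₀))
  have hV : {sInf C} + D ⊆ C + D := add_subset_add_right (singleton_subset_iff.2 (hC.sInf_mem hC₀))
  have hUV : (C + {sSup D}) ∩ ({sInf C} + D) ⊆ {sInf C + sSup D} := by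
    rintro _ ⟨hU, hV⟩
    obtain ⟨c, hc, _, rfl, rfl⟩ := mem_add.1 hU
    obtain ⟨_, rfl, d, hd, he⟩ := mem_add.1 hV
    have := csInf_le hC.bddBelow hc
    have := le_csSup hD.bddAbove hd
    rw [mem_singleton_iff]
    linarith
  calc volume C + volume D = volume (C + {sSup D}) + volume ({sInf C} + D) := by
        rw [add_singleton, singleton_add, image_add_right, image_add_left,
          measure_preimage_add_right, measure_preimage_add]
    _ = volume ((C + {sSup D}) ∪ ({sInf C} + D)) :=
        (measure_union₀ (isCompact_singleton.add hD).isClosed.measurableSet.nullMeasurableSet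
          (measure_mono_null hUV (measure_singleton _))).symm
    _ ≤ volume (C + D) := measure_mono (union_subset hU hV)

theorem Real.volume_add_volume_le_volume_add {F G : Set ℝ} (hF : MeasurableSet F)
    (hG : MeasurableSet G) (hF₀ : F.Nonempty) (hG₀ : G.Nonempty) :
    volume F + volume G ≤ volume (F + G) := by
  obtain ⟨x, hx⟩ := hF₀
  obtain ⟨y, hy⟩ := hG₀
  rw [hF.measure_eq_iSup_isCompact, hG.measure_eq_iSup_isCompact]
  simp only [iSup_and']
  refine ENNReal.biSup_add_biSup_le' ⟨∅, empty_subset _, isCompact_empty⟩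
    ⟨∅, empty_subset _, isCompact_empty⟩ fun C ⟨hCF, hC⟩ D ⟨hDG, hD⟩ => ?_
  -- adding a point keeps the compact sets nonempty without leaving `F` and `G`
  calc volume C + volume D ≤ volume (insert x C) + volume (insert y D) := by
        gcongr <;> exact subset_insert _ _
    _ ≤ volume (insert x C + insert y D) :=
        Real.volume_add_volume_le_volume_add_of_isCompact (hC.insert x) (hD.insert y)
          (insert_nonempty _ _) (insert_nonempty _ _)
    _ ≤ volume (F + G) :=
        measure_mono (add_subset_add (insert_subset hx hCF) (insert_subset hy hDG))

theorem Real.ofReal_mul_volume_add_le_volume_smul_add {F G : Set ℝ} (hF : MeasurableSet F)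
    (hG : MeasurableSet G) (hF₀ : F.Nonempty) (hG₀ : G.Nonempty) {l : ℝ} (hl0 : 0 < l)
    (hl1 : l < 1) :
    ENNReal.ofReal l * volume F + ENNReal.ofReal (1 - l) * volume G ≤
      volume (l • F + (1 - l) • G) := by
  have hvol : ∀ {r : ℝ}, 0 < r → ∀ S : Set ℝ, volume (r • S) = ENNReal.ofReal r * volume S :=
    fun hr S => by simpa using Measure.addHaar_smul_of_nonneg volume hr.le S
  rw [← hvol hl0, ← hvol (sub_pos.2 hl1)]
  exact Real.volume_add_volume_le_volume_add (hF.const_smul₀ l)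
    (hG.const_smul₀ (1 - l)) hF₀.smul_set hG₀.smul_set

theorem ENNReal.geom_mean_le_arith_mean2_weighted (a b : ℝ≥0∞) {l : ℝ} (hl0 : 0 < l)
    (hl1 : l < 1) :
    a ^ l * b ^ (1 - l) ≤ ENNReal.ofReal l * a + ENNReal.ofReal (1 - l) * b := by
  have hl1' : 0 < 1 - l := sub_pos.2 hl1
  have hrpow : ∀ {x : ℝ≥0∞} {p : ℝ}, 0 < p → (x ^ p) ^ p⁻¹ / ENNReal.ofReal p⁻¹ =
      ENNReal.ofReal p * x := fun {x p} hp => by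
    rw [← ENNReal.rpow_mul, mul_inv_cancel₀ hp.ne', ENNReal.rpow_one,
      ENNReal.ofReal_inv_of_pos hp, div_eq_mul_inv, inv_inv, mul_comm]
  simpa only [hrpow hl0, hrpow hl1'] using
    ENNReal.young_inequality (a ^ l) (b ^ (1 - l)) (Real.HolderConjugate.inv_one_sub_inv hl0 hl1)

theorem ENNReal.min_le_rpow_mul_rpow (a b : ℝ≥0∞) {l : ℝ} (hl0 : 0 ≤ l) (hl1 : l ≤ 1) :
    min a b ≤ a ^ l * b ^ (1 - l) :=
  calc min a b = min a b ^ l * min a b ^ (1 - l) := by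
        rw [← ENNReal.rpow_add_of_nonneg _ _ hl0 (sub_nonneg.2 hl1), add_sub_cancel,
          ENNReal.rpow_one]
    _ ≤ a ^ l * b ^ (1 - l) := by gcongr; exacts [min_le_left a b, min_le_right a b]

theorem lintegral_eq_lintegral_meas_ofReal_lt {α : Type*} [MeasurableSpace α] (μ : Measure α)
    {f : α → ℝ≥0∞} (hf : Measurable f) (hf_top : ∀ x, f x ≠ ∞) :
    ∫⁻ x, f x ∂μ = ∫⁻ t in Ioi 0, μ {x | ENNReal.ofReal t < f x} := by
  have := lintegral_eq_lintegral_meas_lt μ (ae_of_all _ fun x => ENNReal.toReal_nonneg)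
    hf.ennreal_toReal.aemeasurable
  simp only [ENNReal.ofReal_toReal (hf_top _)] at this
  rw [this]
  refine setLIntegral_congr_fun measurableSet_Ioi fun t ht => ?_
  simp only [ENNReal.ofReal_lt_iff_lt_toReal ht.le (hf_top _)]

theorem Real.ofReal_mul_lintegral_add_le_lintegral_of_min_le {f g h : ℝ → ℝ≥0∞}
    (hf : Measurable f) (hg : Measurable g) (hh : Measurable h)
    (hfg : ⨆ s, f s = ⨆ s, g s) (hf_top : ⨆ s, f s ≠ ∞) {l : ℝ} (hl0 : 0 < l) (hl1 : l < 1)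
    (hmin : ∀ s t, min (f s) (g t) ≤ h (l * s + (1 - l) * t)) :
    ENNReal.ofReal l * (∫⁻ s, f s) + ENNReal.ofReal (1 - l) * ∫⁻ s, g s ≤ ∫⁻ s, h s := by
  set c := ⨆ s, f s
  have hfc : ∀ s, f s ≤ c := le_iSup f
  have hgc : ∀ s, g s ≤ c := hfg ▸ le_iSup g
  -- truncating `h` at the common supremum `c` keeps `hmin` and makes `h` finite
  set h' := fun s => min (h s) c
  have hsuper : ∀ t : ℝ, ENNReal.ofReal l * volume {s | ENNReal.ofReal t < f s} +
      ENNReal.ofReal (1 - l) * volume {s | ENNReal.ofReal t < g s} ≤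
        volume {s | ENNReal.ofReal t < h' s} := by
    intro t
    -- both superlevel sets are nonempty below `c` and empty above it
    rcases lt_or_ge (ENNReal.ofReal t) c with htc | hct
    · obtain ⟨s₀, hs₀⟩ := lt_iSup_iff.1 htc
      obtain ⟨u₀, hu₀⟩ := lt_iSup_iff.1 (hfg ▸ htc)
      refine (ofReal_mul_volume_add_le_volume_smul_add (measurableSet_lt measurable_const hf)
        (measurableSet_lt measurable_const hg) ⟨s₀, hs₀⟩ ⟨u₀, hu₀⟩ hl0 hl1).trans
        (measure_mono ?_)
      rintro _ ⟨_, ⟨s, hs, rfl⟩, _, ⟨u, hu, rfl⟩, rfl⟩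
      exact lt_min ((lt_min hs hu).trans_le (hmin s u)) htc
    · have hempty : ∀ {φ : ℝ → ℝ≥0∞}, (∀ s, φ s ≤ c) → {s | ENNReal.ofReal t < φ s} = ∅ :=
        fun hφ => eq_empty_of_forall_notMem fun s hs => (hs.trans_le ((hφ s).trans hct)).false
      simp [hempty hfc, hempty hgc]
  have hc_top : ∀ {φ : ℝ → ℝ≥0∞}, (∀ s, φ s ≤ c) → ∀ s, φ s ≠ ∞ :=
    fun hφ s => ne_top_of_le_ne_top hf_top (hφ s)
  calc ENNReal.ofReal l * (∫⁻ s, f s) + ENNReal.ofReal (1 - l) * ∫⁻ s, g s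
      ≤ ∫⁻ t in Ioi 0, (ENNReal.ofReal l * volume {s | ENNReal.ofReal t < f s} +
          ENNReal.ofReal (1 - l) * volume {s | ENNReal.ofReal t < g s}) := by
        rw [lintegral_eq_lintegral_meas_ofReal_lt volume hf (hc_top hfc),
          lintegral_eq_lintegral_meas_ofReal_lt volume hg (hc_top hgc)]
        exact (add_le_add (lintegral_const_mul_le _ _) (lintegral_const_mul_le _ _)).trans
          (le_lintegral_add _ _)
    _ ≤ ∫⁻ t in Ioi 0, volume {s | ENNReal.ofReal t < h' s} := lintegral_mono hsuper
    _ = ∫⁻ s, h' s := (lintegral_eq_lintegral_meas_ofReal_lt volume (hh.min measurable_const)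
          (hc_top fun _ => min_le_right _ _)).symm
    _ ≤ ∫⁻ s, h s := lintegral_mono fun s => min_le_left _ _

theorem Real.lintegral_rpow_mul_lintegral_rpow_le_lintegral {f g h : ℝ → ℝ≥0∞}
    (hf : Measurable f) (hg : Measurable g) (hh : Measurable h)
    (hf_top : ⨆ s, f s ≠ ∞) (hg_top : ⨆ s, g s ≠ ∞) {l : ℝ} (hl0 : 0 < l) (hl1 : l < 1)
    (hfgh : ∀ s t, f s ^ l * g t ^ (1 - l) ≤ h (l * s + (1 - l) * t)) :
    (∫⁻ s, f s) ^ l * (∫⁻ s, g s) ^ (1 - l) ≤ ∫⁻ s, h s := by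
  have hl1' : 0 < 1 - l := sub_pos.2 hl1
  set a := ⨆ s, f s
  set b := ⨆ s, g s
  rcases eq_or_ne a 0 with ha | ha
  · simp [show f = 0 from funext fun s => le_zero_iff.1 (ha ▸ le_iSup f s),
      ENNReal.zero_rpow_of_pos hl0]
  rcases eq_or_ne b 0 with hb | hb
  · simp [show g = 0 from funext fun s => le_zero_iff.1 (hb ▸ le_iSup g s),
      ENNReal.zero_rpow_of_pos hl1']
  -- rescale `f` and `g` to supremum `1`, and `h` accordingly
  have ha₀ : a ^ l ≠ 0 := (ENNReal.rpow_pos (pos_iff_ne_zero.2 ha) hf_top).ne'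
  have hb₀ : b ^ (1 - l) ≠ 0 := (ENNReal.rpow_pos (pos_iff_ne_zero.2 hb) hg_top).ne'
  have ha_top : a ^ l ≠ ∞ := ENNReal.rpow_ne_top_of_nonneg hl0.le hf_top
  have hb_top : b ^ (1 - l) ≠ ∞ := ENNReal.rpow_ne_top_of_nonneg hl1'.le hg_top
  set c := a ^ l * b ^ (1 - l)
  have hscale : ∀ x y : ℝ≥0∞,
      (a⁻¹ * x) ^ l * (b⁻¹ * y) ^ (1 - l) = c⁻¹ * (x ^ l * y ^ (1 - l)) := by
    intro x y
    rw [ENNReal.mul_rpow_of_nonneg _ _ hl0.le, ENNReal.mul_rpow_of_nonneg _ _ hl1'.le,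
      ENNReal.inv_rpow, ENNReal.inv_rpow, ENNReal.mul_inv (.inl ha₀) (.inl ha_top)]
    ring
  have hsup : ∀ {φ : ℝ → ℝ≥0∞}, (⨆ s, φ s) ≠ 0 → (⨆ s, φ s) ≠ ∞ →
      ⨆ s, (⨆ s, φ s)⁻¹ * φ s = 1 :=
    fun h0 htop => by rw [← ENNReal.mul_iSup, ENNReal.inv_mul_cancel h0 htop]
  have key := Real.ofReal_mul_lintegral_add_le_lintegral_of_min_le (hf.const_mul a⁻¹)
    (hg.const_mul b⁻¹) (hh.const_mul c⁻¹) ((hsup ha hf_top).trans (hsup hb hg_top).symm)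
    (by rw [hsup ha hf_top]; exact ENNReal.one_ne_top) hl0 hl1 fun s t =>
      (ENNReal.min_le_rpow_mul_rpow _ _ hl0.le hl1.le).trans
        ((hscale _ _).trans_le (by gcongr; exact hfgh s t))
  rw [lintegral_const_mul _ hf, lintegral_const_mul _ hg, lintegral_const_mul _ hh] at key
  have := (ENNReal.geom_mean_le_arith_mean2_weighted _ _ hl0 hl1).trans key
  rw [hscale] at this
  exact (ENNReal.mul_le_mul_iff_right (ENNReal.inv_ne_zero.2 (ENNReal.mul_ne_top ha_top hb_top))
    (ENNReal.inv_ne_top.2 (mul_ne_zero ha₀ hb₀))).1 this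

theorem IsCompact.preimage_prodMk {X Y : Type*} [TopologicalSpace X] [TopologicalSpace Y]
    [T2Space X] [T2Space Y] {S : Set (X × Y)} (hS : IsCompact S) (x : X) :
    IsCompact (Prod.mk x ⁻¹' S) :=
  (hS.image continuous_snd).of_isClosed_subset (hS.isClosed.preimage (by fun_prop))
    fun y hy => ⟨_, hy, rfl⟩

def MulBrunnMinkowski {E : Type*} [AddCommGroup E] [Module ℝ E] [TopologicalSpace E]
    [MeasurableSpace E] (μ : Measure E) : Prop :=
  ∀ ⦃A B : Set E⦄, IsCompact A → IsCompact B → ∀ ⦃l : ℝ⦄, 0 < l → l < 1 →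
    μ A ^ l * μ B ^ (1 - l) ≤ μ (l • A + (1 - l) • B)

namespace MulBrunnMinkowski

section

variable {E : Type*} [AddCommGroup E] [Module ℝ E] [TopologicalSpace E] [MeasurableSpace E]

theorem of_subsingleton [Subsingleton E] (μ : Measure E) : MulBrunnMinkowski μ := by
  intro A B _ _ l hl0 hl1
  rcases A.eq_empty_or_nonempty with rfl | hA
  · simp [ENNReal.zero_rpow_of_pos hl0]
  rcases B.eq_empty_or_nonempty with rfl | hB
  · simp [ENNReal.zero_rpow_of_pos (sub_pos.2 hl1)]
  rw [(hA.smul_set.add hB.smul_set).eq_univ, hA.eq_univ, hB.eq_univ,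
    ← ENNReal.rpow_add_of_nonneg _ _ hl0.le (sub_pos.2 hl1).le, add_sub_cancel, ENNReal.rpow_one]

theorem smul {μ : Measure E} (hμ : MulBrunnMinkowski μ) (c : ℝ≥0∞) :
    MulBrunnMinkowski (c • μ) := by
  intro A B hA hB l hl0 hl1
  have hc : c ^ l * c ^ (1 - l) = c := by
    rw [← ENNReal.rpow_add_of_nonneg _ _ hl0.le (sub_pos.2 hl1).le, add_sub_cancel,
      ENNReal.rpow_one]
  calc (c • μ) A ^ l * (c • μ) B ^ (1 - l) = c * (μ A ^ l * μ B ^ (1 - l)) := by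
        simp only [Measure.smul_apply, smul_eq_mul, ENNReal.mul_rpow_of_nonneg _ _ hl0.le,
          ENNReal.mul_rpow_of_nonneg _ _ (sub_pos.2 hl1).le]
        rw [mul_mul_mul_comm, hc]
    _ ≤ (c • μ) (l • A + (1 - l) • B) := by
        rw [Measure.smul_apply, smul_eq_mul]
        gcongr
        exact hμ hA hB hl0 hl1

end

variable {E F : Type*} [NormedAddCommGroup E] [NormedSpace ℝ E] [MeasurableSpace E] [BorelSpace E]
  [NormedAddCommGroup F] [NormedSpace ℝ F] [MeasurableSpace F] [BorelSpace F]

theorem map {μ : Measure E} (hμ : MulBrunnMinkowski μ) (e : E ≃L[ℝ] F) :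
    MulBrunnMinkowski (μ.map e) := by
  intro A B hA hB l hl0 hl1
  have hS := (hA.smul l).add (hB.smul (1 - l))
  simp only [map_apply e.continuous.measurable hA.isClosed.measurableSet,
    map_apply e.continuous.measurable hB.isClosed.measurableSet,
    map_apply e.continuous.measurable hS.isClosed.measurableSet, ← e.image_symm_eq_preimage,
    image_add, image_smul_set]
  exact hμ (hA.image e.symm.continuous) (hB.image e.symm.continuous) hl0 hl1

theorem prod {μ : Measure E} [SFinite μ] [IsFiniteMeasureOnCompacts μ]
    (hμ : MulBrunnMinkowski μ) : MulBrunnMinkowski ((volume : Measure ℝ).prod μ) := by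
  intro A B hA hB l hl0 hl1
  have hS := (hA.smul l).add (hB.smul (1 - l))
  have hslice_top : ∀ {S : Set (ℝ × E)}, IsCompact S → ⨆ s, μ (Prod.mk s ⁻¹' S) ≠ ∞ :=
    fun hS => ne_top_of_le_ne_top (hS.image continuous_snd).measure_ne_top
      (iSup_le fun s => measure_mono fun y hy => ⟨_, hy, rfl⟩)
  simp only [Measure.prod_apply hA.isClosed.measurableSet,
    Measure.prod_apply hB.isClosed.measurableSet, Measure.prod_apply hS.isClosed.measurableSet]
  refine Real.lintegral_rpow_mul_lintegral_rpow_le_lintegral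
    (measurable_measure_prodMk_left hA.isClosed.measurableSet)
    (measurable_measure_prodMk_left hB.isClosed.measurableSet)
    (measurable_measure_prodMk_left hS.isClosed.measurableSet) (hslice_top hA) (hslice_top hB)
    hl0 hl1 fun s t => (hμ (hA.preimage_prodMk s) (hB.preimage_prodMk t) hl0 hl1).trans
      (measure_mono ?_)
  rintro _ ⟨_, ⟨x, hx, rfl⟩, _, ⟨y, hy, rfl⟩, rfl⟩
  exact ⟨_, ⟨_, hx, rfl⟩, _, ⟨_, hy, rfl⟩, by simp⟩

theorem of_isAddHaarMeasure [FiniteDimensional ℝ E] [FiniteDimensional ℝ F] {μ : Measure E}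
    [IsAddHaarMeasure μ] (hμ : MulBrunnMinkowski μ) (hEF : finrank ℝ E = finrank ℝ F)
    (ν : Measure F) [IsAddHaarMeasure ν] : MulBrunnMinkowski ν := by
  let e := ContinuousLinearEquiv.ofFinrankEq hEF
  rw [isAddLeftInvariant_eq_smul ν (μ.map e)]
  exact (hμ.map e).smul _

end MulBrunnMinkowski

theorem mulBrunnMinkowski_volume_pi : ∀ n : ℕ, MulBrunnMinkowski (volume : Measure (Fin n → ℝ))
  | 0 => .of_subsingleton _
  | n + 1 => (mulBrunnMinkowski_volume_pi n).prod.of_isAddHaarMeasure (by simp [add_comm]) _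

theorem mulBrunnMinkowski_addHaar {E : Type*} [NormedAddCommGroup E] [NormedSpace ℝ E]
    [FiniteDimensional ℝ E] [MeasurableSpace E] [BorelSpace E] (μ : Measure E)
    [IsAddHaarMeasure μ] : MulBrunnMinkowski μ :=
  (mulBrunnMinkowski_volume_pi (finrank ℝ E)).of_isAddHaarMeasure (finrank_fin_fun ℝ) μ

theorem measure_le_measure_add_left {G : Type*} [AddGroup G] [MeasurableSpace G]
    [MeasurableAdd G] (μ : Measure G) [μ.IsAddLeftInvariant] {s t : Set G} (hs : s.Nonempty) :
    μ t ≤ μ (s + t) := by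
  obtain ⟨x, hx⟩ := hs
  calc μ t = μ ({x} + t) := by rw [singleton_add, image_add_left, measure_preimage_add]
    _ ≤ μ (s + t) := measure_mono (add_subset_add_right (singleton_subset_iff.2 hx))

theorem measure_le_measure_add_right {G : Type*} [AddGroup G] [MeasurableSpace G]
    [MeasurableAdd G] (μ : Measure G) [μ.IsAddRightInvariant] {s t : Set G} (ht : t.Nonempty) :
    μ s ≤ μ (s + t) := by
  obtain ⟨x, hx⟩ := ht
  calc μ s = μ (s + {x}) := by rw [add_singleton, image_add_right, measure_preimage_add_right]
    _ ≤ μ (s + t) := measure_mono (add_subset_add_left (singleton_subset_iff.2 hx))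

section

variable {E : Type*} [NormedAddCommGroup E] [NormedSpace ℝ E] [FiniteDimensional ℝ E]
  [MeasurableSpace E] [BorelSpace E] (μ : Measure E) [IsAddHaarMeasure μ]

theorem addHaar_smul_rpow_inv_finrank (hE : finrank ℝ E ≠ 0) {r : ℝ} (hr : 0 ≤ r) (S : Set E) :
    μ (r • S) ^ (finrank ℝ E : ℝ)⁻¹ = ENNReal.ofReal r * μ S ^ (finrank ℝ E : ℝ)⁻¹ := by
  rw [addHaar_smul_of_nonneg μ hr, ENNReal.mul_rpow_of_nonneg _ _ (by positivity),
    ENNReal.ofReal_rpow_of_nonneg (by positivity) (by positivity), ← Real.rpow_natCast,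
    ← Real.rpow_mul hr, mul_inv_cancel₀ (by exact_mod_cast hE), Real.rpow_one]

theorem ofReal_mul_addHaar_rpow_add_le_of_ne_zero (hE : finrank ℝ E ≠ 0) {A B : Set E}
    (hA : IsCompact A) (hB : IsCompact B) (hA0 : μ A ≠ 0) (hB0 : μ B ≠ 0) {l : ℝ} (hl0 : 0 < l)
    (hl1 : l < 1) :
    ENNReal.ofReal l * μ A ^ (finrank ℝ E : ℝ)⁻¹ +
        ENNReal.ofReal (1 - l) * μ B ^ (finrank ℝ E : ℝ)⁻¹ ≤
      μ (l • A + (1 - l) • B) ^ (finrank ℝ E : ℝ)⁻¹ := by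
  set p := (finrank ℝ E : ℝ)⁻¹
  have hp : 0 < p := by positivity
  have hscale : ∀ {r : ℝ}, 0 ≤ r → ∀ S : Set E, μ (r • S) ^ p = ENNReal.ofReal r * μ S ^ p :=
    addHaar_smul_rpow_inv_finrank μ hE
  -- rescaled to unit volume, `A` and `B` enter the multiplicative inequality with weight `l α / D`
  have hunit : ∀ {S : Set E}, IsCompact S → μ S ≠ 0 →
      ∃ α : ℝ, 0 < α ∧ μ S ^ p = ENNReal.ofReal α ∧ μ (α⁻¹ • S) = 1 := fun {S} hS hS0 => by
    have htop := ENNReal.rpow_ne_top_of_nonneg hp.le (hS.measure_ne_top (μ := μ))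
    obtain ⟨α, hα, hSα⟩ : ∃ α : ℝ, 0 < α ∧ μ S ^ p = ENNReal.ofReal α :=
      ⟨_, ENNReal.toReal_pos (ENNReal.rpow_pos (pos_iff_ne_zero.2 hS0)
        (hS.measure_ne_top (μ := μ))).ne' htop, (ENNReal.ofReal_toReal htop).symm⟩
    refine ⟨α, hα, hSα, ?_⟩
    rw [← ENNReal.rpow_inv_rpow (y := (finrank ℝ E : ℝ)) (by exact_mod_cast hE) (μ _),
      hscale (inv_nonneg.2 hα.le), hSα, ← ENNReal.ofReal_mul (inv_nonneg.2 hα.le),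
      inv_mul_cancel₀ hα.ne', ENNReal.ofReal_one, ENNReal.one_rpow]
  obtain ⟨α, hα, hαA, hA1⟩ := hunit hA hA0
  obtain ⟨β, hβ, hβB, hB1⟩ := hunit hB hB0
  set D := l * α + (1 - l) * β
  have hD : 0 < D := by nlinarith
  have hs0 : 0 < l * α / D := by positivity
  have hs1 : l * α / D < 1 := (div_lt_one hD).2 (by nlinarith)
  have hsum : l • A + (1 - l) • B =
      D • ((l * α / D) • α⁻¹ • A + (1 - l * α / D) • β⁻¹ • B) := by
    rw [smul_add, smul_smul, smul_smul, smul_smul, smul_smul]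
    congr 2
    · field_simp
    · field_simp
      ring
  have hBM := mulBrunnMinkowski_addHaar μ (hA.smul α⁻¹) (hB.smul β⁻¹) hs0 hs1
  rw [hA1, hB1, ENNReal.one_rpow, ENNReal.one_rpow, one_mul] at hBM
  calc ENNReal.ofReal l * μ A ^ p + ENNReal.ofReal (1 - l) * μ B ^ p = ENNReal.ofReal D := by
        rw [hαA, hβB, ← ENNReal.ofReal_mul hl0.le, ← ENNReal.ofReal_mul (sub_pos.2 hl1).le,
          ← ENNReal.ofReal_add (by positivity) (by nlinarith)]
    _ ≤ ENNReal.ofReal D * μ ((l * α / D) • α⁻¹ • A + (1 - l * α / D) • β⁻¹ • B) ^ p :=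
        le_mul_of_one_le_right' (ENNReal.one_le_rpow hBM hp)
    _ = μ (l • A + (1 - l) • B) ^ p := by rw [hsum, hscale hD.le]

theorem ofReal_mul_addHaar_rpow_add_le {A B : Set E} (hA : IsCompact A) (hB : IsCompact B)
    (hA₀ : A.Nonempty) (hB₀ : B.Nonempty) {l : ℝ} (hl0 : 0 < l) (hl1 : l < 1) :
    ENNReal.ofReal l * μ A ^ (finrank ℝ E : ℝ)⁻¹ +
        ENNReal.ofReal (1 - l) * μ B ^ (finrank ℝ E : ℝ)⁻¹ ≤
      μ (l • A + (1 - l) • B) ^ (finrank ℝ E : ℝ)⁻¹ := by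
  have hl1' : 0 < 1 - l := sub_pos.2 hl1
  rcases eq_or_ne (finrank ℝ E) 0 with hE | hE
  · simp [hE, ← ENNReal.ofReal_add hl0.le hl1'.le]
  have hp : 0 < (finrank ℝ E : ℝ)⁻¹ := by positivity
  -- a null set still contributes a translate of the other (scaled) set
  rcases eq_or_ne (μ A) 0 with hA0 | hA0
  · rw [hA0, ENNReal.zero_rpow_of_pos hp, mul_zero, zero_add,
      ← addHaar_smul_rpow_inv_finrank μ hE hl1'.le]
    exact ENNReal.rpow_le_rpow (measure_le_measure_add_left μ hA₀.smul_set) hp.le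
  rcases eq_or_ne (μ B) 0 with hB0 | hB0
  · rw [hB0, ENNReal.zero_rpow_of_pos hp, mul_zero, add_zero,
      ← addHaar_smul_rpow_inv_finrank μ hE hl0.le]
    exact ENNReal.rpow_le_rpow (measure_le_measure_add_right μ hB₀.smul_set) hp.le
  exact ofReal_mul_addHaar_rpow_add_le_of_ne_zero μ hE hA hB hA0 hB0 hl0 hl1

end

theorem Convex.smul_inter_sub_add_smul_inter_sub_subset {E : Type*} [AddCommGroup E]
    [Module ℝ E] {K L : Set E} (hK : Convex ℝ K) (hL : Convex ℝ L) (x y : E) {a b : ℝ}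
    (ha : 0 ≤ a) (hb : 0 ≤ b) (hab : a + b = 1) :
    a • (K ∩ ({x} - L)) + b • (K ∩ ({y} - L)) ⊆ K ∩ ({a • x + b • y} - L) := by
  rintro _ ⟨_, ⟨_, ⟨hu, _, rfl, m, hm, rfl⟩, rfl⟩, _, ⟨_, ⟨hv, _, rfl, m', hm', rfl⟩, rfl⟩, rfl⟩
  refine ⟨hK hu hv ha hb hab, _, rfl, a • m + b • m', hL hm hm' ha hb hab, ?_⟩
  module

theorem inter_singleton_sub_nonempty_of_mem_add {E : Type*} [AddCommGroup E] {K L : Set E}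
    {x : E} (hx : x ∈ K + L) : (K ∩ ({x} - L)).Nonempty := by
  obtain ⟨k, hk, m, hm, rfl⟩ := hx
  exact ⟨k, hk, _, rfl, m, hm, add_sub_cancel_right k m⟩

section

variable {E : Type*} [NormedAddCommGroup E] [NormedSpace ℝ E] [FiniteDimensional ℝ E]
  [MeasurableSpace E] [BorelSpace E] (μ : Measure E) [IsAddHaarMeasure μ]

theorem ofReal_mul_addHaar_inter_sub_rpow_add_le {K L : Set E} (hK : IsCompact K)
    (hKc : Convex ℝ K) (hL : IsCompact L) (hLc : Convex ℝ L) {x y : E} (hx : x ∈ K + L)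
    (hy : y ∈ K + L) {l : ℝ} (hl0 : 0 < l) (hl1 : l < 1) :
    ENNReal.ofReal l * μ (K ∩ ({x} - L)) ^ (finrank ℝ E : ℝ)⁻¹ +
        ENNReal.ofReal (1 - l) * μ (K ∩ ({y} - L)) ^ (finrank ℝ E : ℝ)⁻¹ ≤
      μ (K ∩ ({l • x + (1 - l) • y} - L)) ^ (finrank ℝ E : ℝ)⁻¹ := by
  have hsection : ∀ z, IsCompact (K ∩ ({z} - L)) := fun z => by
    rw [singleton_sub]
    exact hK.inter_right (hL.image (continuous_sub_left z)).isClosed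
  calc _ ≤ μ (l • (K ∩ ({x} - L)) + (1 - l) • (K ∩ ({y} - L))) ^ (finrank ℝ E : ℝ)⁻¹ :=
        ofReal_mul_addHaar_rpow_add_le μ (hsection x) (hsection y)
          (inter_singleton_sub_nonempty_of_mem_add hx)
          (inter_singleton_sub_nonempty_of_mem_add hy) hl0 hl1
    _ ≤ _ := ENNReal.rpow_le_rpow (measure_mono
        (hKc.smul_inter_sub_add_smul_inter_sub_subset hLc x y hl0.le (sub_pos.2 hl1).le
          (add_sub_cancel l 1))) (by positivity)

end

theorem iSup_measure_inter_singleton_sub_pos {G : Type*} [AddGroup G] [TopologicalSpace G]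
    [IsTopologicalAddGroup G] [MeasurableSpace G] (μ : Measure G) [μ.IsOpenPosMeasure]
    {K L : Set G} (hK : (interior K).Nonempty) (hL : (interior L).Nonempty) :
    0 < ⨆ z, μ (K ∩ ({z} - L)) := by
  obtain ⟨k, hk⟩ := hK
  obtain ⟨m, hm⟩ := hL
  have hU : IsOpen (interior K ∩ ({k + m} - interior L)) :=
    isOpen_interior.inter isOpen_interior.sub_left
  calc 0 < μ (interior K ∩ ({k + m} - interior L)) :=
        hU.measure_pos μ ⟨k, hk, _, rfl, m, hm, add_sub_cancel_right k m⟩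
    _ ≤ μ (K ∩ ({k + m} - L)) :=
        measure_mono (inter_subset_inter interior_subset (sub_subset_sub_left interior_subset))
    _ ≤ ⨆ z, μ (K ∩ ({z} - L)) := le_iSup (fun z => μ (K ∩ ({z} - L))) (k + m)

theorem zero_mem_convBody {n : ℕ} {K L : Set (EuclideanSpace ℝ (Fin n))}
    (hM : (⨆ z : EuclideanSpace ℝ (Fin n), volume (K ∩ ({z} - L))) = volume (K ∩ (-L)))
    (hKL : (K ∩ -L).Nonempty) {θ : ℝ} (hθ : θ ≤ 1) : 0 ∈ convBody n θ K L := by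
  obtain ⟨b, hbK, hbL⟩ := hKL
  refine ⟨⟨b, hbK, -b, hbL, add_neg_cancel b⟩, ?_⟩
  rw [hM, singleton_zero, zero_sub]
  exact mul_le_of_le_one_left' (ENNReal.ofReal_le_one.2 hθ)

theorem smul_mem_convBody {n : ℕ} (hn : n ≠ 0) {K L : Set (EuclideanSpace ℝ (Fin n))}
    (hK : IsCompact K) (hKc : Convex ℝ K) (hL : IsCompact L) (hLc : Convex ℝ L)
    (hM : (⨆ z : EuclideanSpace ℝ (Fin n), volume (K ∩ ({z} - L))) = volume (K ∩ (-L)))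
    (hKL : (K ∩ -L).Nonempty) {θ₀ θ : ℝ} (h₀ : 0 ≤ θ₀) (h₀θ : θ₀ < θ) (hθ : θ < 1)
    {x : EuclideanSpace ℝ (Fin n)} (hx : x ∈ convBody n θ₀ K L) :
    ((1 - θ ^ (n : ℝ)⁻¹) / (1 - θ₀ ^ (n : ℝ)⁻¹)) • x ∈ convBody n θ K L := by
  set p := (n : ℝ)⁻¹
  have hp : 0 < p := by positivity
  set a₀ := θ₀ ^ p
  set a := θ ^ p
  have ha₀a : a₀ < a := Real.rpow_lt_rpow h₀ h₀θ hp
  have ha1 : a < 1 := Real.rpow_lt_one (h₀.trans h₀θ.le) hθ hp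
  have ha₀1 : 0 < 1 - a₀ := by linarith
  set l := (1 - a) / (1 - a₀)
  have hl0 : 0 < l := div_pos (by linarith) ha₀1
  have hl1 : l < 1 := (div_lt_one ha₀1).2 (by linarith)
  have hl : l * a₀ + (1 - l) = a := by
    simp only [l]
    field_simp [ha₀1.ne']
    ring
  have h0 := (zero_mem_convBody hM hKL hθ.le).1
  refine ⟨by simpa using (hKc.add hLc) hx.1 h0 hl0.le (sub_pos.2 hl1).le (add_sub_cancel l 1), ?_⟩
  have hx₂ := hx.2
  rw [hM] at hx₂ ⊢
  have hBrunn := ofReal_mul_addHaar_inter_sub_rpow_add_le volume hK hKc hL hLc hx.1 h0 hl0 hl1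
  rw [finrank_euclideanSpace_fin, singleton_zero, zero_sub, smul_zero, add_zero] at hBrunn
  rw [← ENNReal.rpow_le_rpow_iff hp]
  calc (ENNReal.ofReal θ * volume (K ∩ -L)) ^ p
      = ENNReal.ofReal l * (ENNReal.ofReal a₀ * volume (K ∩ -L) ^ p) +
          ENNReal.ofReal (1 - l) * volume (K ∩ -L) ^ p := by
        rw [← mul_assoc, ← ENNReal.ofReal_mul hl0.le, ← add_mul,
          ← ENNReal.ofReal_add (by positivity) (sub_pos.2 hl1).le, hl,
          ENNReal.mul_rpow_of_nonneg _ _ hp.le,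
          ENNReal.ofReal_rpow_of_nonneg (h₀.trans h₀θ.le) hp.le]
    _ ≤ ENNReal.ofReal l * volume (K ∩ ({x} - L)) ^ p +
          ENNReal.ofReal (1 - l) * volume (K ∩ -L) ^ p := by
        gcongr
        rw [← ENNReal.ofReal_rpow_of_nonneg h₀ hp.le, ← ENNReal.mul_rpow_of_nonneg _ _ hp.le]
        exact ENNReal.rpow_le_rpow hx₂ hp.le
    _ ≤ volume (K ∩ ({l • x} - L)) ^ p := hBrunn

theorem convBody_monotone_in_theta (n : ℕ) (K L : Set (EuclideanSpace ℝ (Fin n)))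
    (hK : IsCompact K) (hKc : Convex ℝ K) (hKi : (interior K).Nonempty)
    (hL : IsCompact L) (hLc : Convex ℝ L) (hLi : (interior L).Nonempty)
    (hM : (⨆ z : EuclideanSpace ℝ (Fin n), volume (K ∩ ({z} - L))) = volume (K ∩ (-L)))
    (θ₀ θ : ℝ) (h₀ : 0 ≤ θ₀) (h₀θ : θ₀ ≤ θ) (hθ : θ < 1) :
    (1 - θ ^ ((n : ℝ)⁻¹)) • convBody n θ₀ K L ⊆
      (1 - θ₀ ^ ((n : ℝ)⁻¹)) • convBody n θ K L := by
  have hKL : (K ∩ -L).Nonempty := nonempty_of_measure_ne_zero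
    (hM ▸ iSup_measure_inter_singleton_sub_pos volume hKi hLi).ne'
  rcases Nat.eq_zero_or_pos n with rfl | hn
  · -- in dimension zero both dilation factors are `1 - 1 = 0`
    simp only [CharP.cast_eq_zero, inv_zero, Real.rpow_zero, sub_self]
    exact (zero_smul_set_subset _).trans
      (zero_smul_set ⟨0, zero_mem_convBody hM hKL hθ.le⟩).symm.subset
  rcases h₀θ.eq_or_lt with rfl | hlt
  · rfl
  rintro _ ⟨x, hx, rfl⟩
  have ha₀ : 1 - θ₀ ^ (n : ℝ)⁻¹ ≠ 0 :=
    (sub_pos.2 (Real.rpow_lt_one h₀ (hlt.trans hθ) (by positivity))).ne'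
  exact ⟨_, smul_mem_convBody hn.ne' hK hKc hL hLc hM hKL h₀ hlt hθ hx,
    by simp only [smul_smul, mul_div_cancel₀ _ ha₀]⟩
end

section
/- Let K, L be convex bodies in ℝⁿ with M(K,L) = |K ∩ (-L)|. For every θ ∈ [0,1], θ^{1/n}(K +_1 L) + (1 - θ^{1/n})(K + L) ⊆ K +_θ L. -/
open MeasureTheory Set
open scoped Pointwise

/-!
If `x, y ∈ K + L` with `y = k + m`, `k ∈ K`, `m ∈ L`, then for `p = t x + (1 - t) y` the section
`K ∩ (p - L)` contains the homothetic copy `(1 - t) k + t (K ∩ (x - L))`, by convexity of `K` and `L`.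
Hence `|K ∩ (p - L)| ≥ tⁿ |K ∩ (x - L)|`; with `t = θ^{1/n}` and `|K ∩ (x - L)| = M(K, L)` this is
`≥ θ M(K, L)`.
-/

lemma le_rpow_inv_natCast_pow {θ : ℝ} (hθ : θ ∈ Icc (0 : ℝ) 1) (n : ℕ) :
    θ ≤ (θ ^ ((n : ℝ)⁻¹)) ^ n := by
  rcases eq_or_ne n 0 with rfl | hn
  · simpa using hθ.2
  · exact (Real.rpow_inv_natCast_pow hθ.1 hn).ge

section Convex

variable {E : Type*} [AddCommGroup E] [Module ℝ E] {K L : Set E}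

lemma vadd_smul_inter_singleton_sub_subset (hK : Convex ℝ K) (hL : Convex ℝ L)
    {t : ℝ} (ht : t ∈ Icc (0 : ℝ) 1) (x : E) {k m : E} (hk : k ∈ K) (hm : m ∈ L) :
    ((1 - t) • k) +ᵥ t • (K ∩ ({x} - L)) ⊆ K ∩ ({t • x + (1 - t) • (k + m)} - L) := by
  rintro _ ⟨_, ⟨_, ⟨haK, _, rfl, u, hu, rfl⟩, rfl⟩, rfl⟩
  have ht' : 0 ≤ 1 - t := sub_nonneg.2 ht.2
  refine ⟨?_, _, rfl, t • u + (1 - t) • m, hL hu hm ht.1 ht' (by ring), ?_⟩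
  · simp only [vadd_eq_add]
    rw [add_comm]
    exact hK haK hk ht.1 ht' (by ring)
  · simp only [vadd_eq_add]
    module

end Convex

section Measure

variable {E : Type*} [NormedAddCommGroup E] [NormedSpace ℝ E] [MeasurableSpace E] [BorelSpace E]
  [FiniteDimensional ℝ E] (μ : Measure E) [μ.IsAddHaarMeasure] {K L : Set E}

lemma ofReal_pow_finrank_mul_measure_inter_sub_le (hK : Convex ℝ K) (hL : Convex ℝ L)
    {t : ℝ} (ht : t ∈ Icc (0 : ℝ) 1) (x : E) {y : E} (hy : y ∈ K + L) :
    ENNReal.ofReal (t ^ Module.finrank ℝ E) * μ (K ∩ ({x} - L)) ≤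
      μ (K ∩ ({t • x + (1 - t) • y} - L)) := by
  obtain ⟨k, hk, m, hm, rfl⟩ := hy
  calc ENNReal.ofReal (t ^ Module.finrank ℝ E) * μ (K ∩ ({x} - L))
      = μ (((1 - t) • k) +ᵥ t • (K ∩ ({x} - L))) := by
        rw [measure_vadd, Measure.addHaar_smul μ, abs_of_nonneg (pow_nonneg ht.1 _)]
    _ ≤ μ (K ∩ ({t • x + (1 - t) • (k + m)} - L)) :=
        measure_mono (vadd_smul_inter_singleton_sub_subset hK hL ht x hk hm)

end Measure

theorem convBody_RogersShephard_inclusion_general (n : ℕ) (K L : Set (EuclideanSpace ℝ (Fin n)))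
    (hKc : Convex ℝ K) (hLc : Convex ℝ L) (θ : ℝ) (hθ : θ ∈ Set.Icc (0 : ℝ) 1) :
    (θ ^ ((n : ℝ)⁻¹)) • convBody n 1 K L + (1 - θ ^ ((n : ℝ)⁻¹)) • (K + L) ⊆
      convBody n θ K L := by
  set t := θ ^ ((n : ℝ)⁻¹)
  have ht : t ∈ Icc (0 : ℝ) 1 :=
    ⟨Real.rpow_nonneg hθ.1 _, Real.rpow_le_one hθ.1 hθ.2 (by positivity)⟩
  rintro _ ⟨_, ⟨x, ⟨hxKL, hxM⟩, rfl⟩, _, ⟨y, hy, rfl⟩, rfl⟩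
  refine ⟨(hKc.add hLc) hxKL hy ht.1 (sub_nonneg.2 ht.2) (by ring), ?_⟩
  calc ENNReal.ofReal θ * ⨆ z, volume (K ∩ ({z} - L))
      ≤ ENNReal.ofReal (t ^ n) * volume (K ∩ ({x} - L)) :=
        mul_le_mul' (ENNReal.ofReal_le_ofReal (le_rpow_inv_natCast_pow hθ n))
          (by simpa using hxM)
    _ ≤ volume (K ∩ ({t • x + (1 - t) • y} - L)) := by
        simpa using ofReal_pow_finrank_mul_measure_inter_sub_le volume hKc hLc ht x hy

theorem convBody_RogersShephard_inclusion (n : ℕ) (K L : Set (EuclideanSpace ℝ (Fin n)))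
    (hK : IsCompact K) (hKc : Convex ℝ K) (hKi : (interior K).Nonempty)
    (hL : IsCompact L) (hLc : Convex ℝ L) (hLi : (interior L).Nonempty)
    (hM : (⨆ z : EuclideanSpace ℝ (Fin n), volume (K ∩ ({z} - L))) = volume (K ∩ (-L)))
    (θ : ℝ) (hθ : θ ∈ Set.Icc (0 : ℝ) 1) :
    (θ ^ ((n : ℝ)⁻¹)) • convBody n 1 K L + (1 - θ ^ ((n : ℝ)⁻¹)) • (K + L) ⊆
      convBody n θ K L :=
  convBody_RogersShephard_inclusion_general n K L hKc hLc θ hθ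
end

section
/- The function x ↦ |K ∩ (x - L)| from ℝⁿ to ℝ is continuous, for convex bodies K, L in ℝⁿ. -/
/-!
Moving `x` changes `|K ∩ (x - L)|` by at most `|(x - L) ∆ (x₀ - L)|`. Since `x - L` is the preimage
of `L` under the measure-preserving map `y ↦ x - y`, which depends continuously on `x`, this
symmetric difference tends to `0` as `x → x₀`.
-/

open MeasureTheory Set Filter Topology
open scoped Pointwise symmDiff

section MeasureSymmDiff

variable {α : Type*} [MeasurableSpace α] {μ : Measure α}

lemma measure_inter_le_add_measure_symmDiff (t a b : Set α) :
    μ (t ∩ a) ≤ μ (t ∩ b) + μ (a ∆ b) := by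
  refine (measure_mono fun x hx => ?_).trans (measure_union_le _ _)
  by_cases hb : x ∈ b
  · exact Or.inl ⟨hx.1, hb⟩
  · exact Or.inr (Or.inl ⟨hx.2, hb⟩)

lemma abs_toReal_measure_inter_sub_le (t : Set α) {a b : Set α} (ha : μ a ≠ ⊤) (hb : μ b ≠ ⊤) :
    |(μ (t ∩ a)).toReal - (μ (t ∩ b)).toReal| ≤ (μ (a ∆ b)).toReal := by
  have hab : μ (a ∆ b) ≠ ⊤ := measure_symmDiff_ne_top ha hb
  have h₁ := ENNReal.toReal_le_add (measure_inter_le_add_measure_symmDiff (μ := μ) t a b)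
    (measure_ne_top_of_subset inter_subset_right hb) hab
  have h₂ := ENNReal.toReal_le_add (measure_inter_le_add_measure_symmDiff (μ := μ) t b a)
    (measure_ne_top_of_subset inter_subset_right ha) (symmDiff_comm a b ▸ hab)
  rw [symmDiff_comm] at h₂
  rw [abs_sub_le_iff]
  constructor <;> linarith

end MeasureSymmDiff

lemma preimage_const_sub_eq_singleton_sub {G : Type*} [AddCommGroup G] (x : G) (s : Set G) :
    (x - ·) ⁻¹' s = {x} - s := by
  rw [singleton_sub, (const_sub_involutive x).image_eq_preimage_symm]

section SingletonSub

variable {G : Type*} [AddCommGroup G] [TopologicalSpace G] [IsTopologicalAddGroup G]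
  [MeasurableSpace G] [BorelSpace G] {μ : Measure G} [μ.IsAddLeftInvariant] [μ.IsNegInvariant]

lemma measure_singleton_sub (x : G) {s : Set G} (hs : NullMeasurableSet s μ) :
    μ ({x} - s) = μ s := by
  rw [← preimage_const_sub_eq_singleton_sub, (μ.measurePreserving_sub_left x).measure_preimage hs]

variable [μ.InnerRegularCompactLTTop] [IsLocallyFiniteMeasure μ]

lemma tendsto_measure_singleton_sub_symmDiff {s : Set G} (hs : NullMeasurableSet s μ)
    (hμs : μ s ≠ ⊤) (x₀ : G) :
    Tendsto (fun x => μ (({x} - s) ∆ ({x₀} - s))) (𝓝 x₀) (𝓝 0) := by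
  let f : C(G, C(G, G)) := ContinuousMap.curry ⟨fun p => p.1 - p.2, continuous_sub⟩
  have hf (x : G) : f x ⁻¹' s = {x} - s := preimage_const_sub_eq_singleton_sub x s
  simpa only [hf] using tendsto_measure_symmDiff_preimage_nhds_zero (f.continuous.tendsto x₀)
    (.of_forall μ.measurePreserving_sub_left) (μ.measurePreserving_sub_left x₀) hs hμs

theorem continuous_toReal_measure_inter_singleton_sub (t : Set G) {s : Set G}
    (hs : NullMeasurableSet s μ) (hμs : μ s ≠ ⊤) :
    Continuous fun x => (μ (t ∩ ({x} - s))).toReal := by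
  have hfin (x : G) : μ ({x} - s) ≠ ⊤ := measure_singleton_sub x hs ▸ hμs
  refine continuous_iff_continuousAt.2 fun x₀ => ?_
  rw [ContinuousAt, tendsto_iff_dist_tendsto_zero]
  refine squeeze_zero (fun _ => dist_nonneg)
    (fun x => abs_toReal_measure_inter_sub_le t (hfin x) (hfin x₀)) ?_
  simpa [Function.comp_def] using (ENNReal.tendsto_toReal ENNReal.zero_ne_top).comp
    (tendsto_measure_singleton_sub_symmDiff hs hμs x₀)

end SingletonSub

theorem intersection_volume_continuous_general (n : ℕ) (K L : Set (EuclideanSpace ℝ (Fin n)))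
    (hL : IsCompact L) :
    Continuous (fun x : EuclideanSpace ℝ (Fin n) => (volume (K ∩ ({x} - L))).toReal) :=
  continuous_toReal_measure_inter_singleton_sub K hL.isClosed.measurableSet.nullMeasurableSet
    hL.measure_lt_top.ne

theorem intersection_volume_continuous (n : ℕ) (K L : Set (EuclideanSpace ℝ (Fin n)))
    (hK : IsCompact K) (hKc : Convex ℝ K) (hKi : (interior K).Nonempty)
    (hL : IsCompact L) (hLc : Convex ℝ L) (hLi : (interior L).Nonempty) :
    Continuous (fun x : EuclideanSpace ℝ (Fin n) => (volume (K ∩ ({x} - L))).toReal) :=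
  intersection_volume_continuous_general n K L hL
end

section
/- Let K, L be convex bodies in ℝⁿ and θ ∈ [0,1). Then the boundary of K +_θ L equals {x ∈ K + L : |K ∩ (x - L)| = θ · M(K,L)}. -/
open MeasureTheory Set
open scoped Pointwise ENNReal symmDiff Topology

namespace ENNReal

theorem min_le_rpow_mul_rpow_s12 {a b : ℝ} (ha : 0 ≤ a) (hb : 0 ≤ b) (hab : a + b = 1) (x y : ℝ≥0∞) :
    min x y ≤ x ^ a * y ^ b :=
  calc min x y = min x y ^ a * min x y ^ b := by
        rw [← rpow_add_of_nonneg _ _ ha hb, hab, rpow_one]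
    _ ≤ x ^ a * y ^ b := by gcongr <;> simp

theorem rpow_mul_rpow_le_add {a b : ℝ} (ha : 0 < a) (hb : 0 < b) (hab : a + b = 1) (x y : ℝ≥0∞) :
    x ^ a * y ^ b ≤ ENNReal.ofReal a * x + ENNReal.ofReal b * y := by
  rcases eq_or_ne x ⊤ with rfl | hx
  · simp [mul_top, ha]
  rcases eq_or_ne y ⊤ with rfl | hy
  · simp [mul_top, hb]
  lift x to NNReal using hx
  lift y to NNReal using hy
  have := NNReal.geom_mean_le_arith_mean2_weighted a.toNNReal b.toNNReal x y
    (by rw [← Real.toNNReal_add ha.le hb.le, hab, Real.toNNReal_one])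
  rw [Real.coe_toNNReal _ ha.le, Real.coe_toNNReal _ hb.le] at this
  rw [← coe_rpow_of_nonneg _ ha.le, ← coe_rpow_of_nonneg _ hb.le, ENNReal.ofReal, ENNReal.ofReal]
  exact_mod_cast this

end ENNReal

theorem lintegral_min_one_eq_lintegral_measure_superlevel {α : Type*} [MeasurableSpace α]
    (μ : Measure α) {u : α → ℝ≥0∞} (hu : Measurable u) :
    ∫⁻ x, min (u x) 1 ∂μ = ∫⁻ t in Ioo 0 1, μ {x | ENNReal.ofReal t ≤ u x} := by
  have hfin (x : α) : min (u x) 1 ≠ ⊤ := ne_top_of_le_ne_top ENNReal.one_ne_top (min_le_right _ _)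
  have hle (x : α) : (min (u x) 1).toReal ≤ 1 :=
    ENNReal.toReal_le_of_le_ofReal zero_le_one (by simp)
  have key := lintegral_eq_lintegral_meas_le μ (f := fun x => (min (u x) 1).toReal)
    (.of_forall fun _ => ENNReal.toReal_nonneg)
    (hu.min measurable_const).ennreal_toReal.aemeasurable
  simp only [ENNReal.ofReal_toReal (hfin _)] at key
  have hempty : ∀ t ∈ Ioi (1 : ℝ), μ {x | t ≤ (min (u x) 1).toReal} = 0 := fun t ht =>
    measure_mono_null (fun x hx => (ht.trans_le (hx.trans (hle x))).false) measure_empty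
  rw [key, ← Ioc_union_Ioi_eq_Ioi zero_le_one,
    lintegral_union measurableSet_Ioi Ioc_disjoint_Ioi_same, setLIntegral_congr Ioo_ae_eq_Ioc.symm,
    setLIntegral_congr_fun measurableSet_Ioi hempty, lintegral_zero, add_zero]
  refine setLIntegral_congr_fun measurableSet_Ioo fun t ht => congrArg μ (ext fun x => ?_)
  simp only [mem_ofPred_eq, ← ENNReal.ofReal_le_iff_le_toReal (hfin x), le_min_iff,
    ENNReal.ofReal_le_one.2 ht.2.le, and_true]

theorem Real.volume_vadd_smul (c r : ℝ) (hr : 0 ≤ r) (S : Set ℝ) :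
    volume (c +ᵥ r • S) = ENNReal.ofReal r * volume S := by
  rw [measure_vadd, Measure.addHaar_smul, Module.finrank_self, pow_one, abs_of_nonneg hr]

theorem IsCompact.add_volume_le_volume_smul_add_smul {a b : ℝ} (ha : 0 ≤ a) (hb : 0 ≤ b)
    {S T : Set ℝ} (hS : IsCompact S) (hT : IsCompact T) (hS₀ : S.Nonempty) (hT₀ : T.Nonempty) :
    ENNReal.ofReal a * volume S + ENNReal.ofReal b * volume T ≤ volume (a • S + b • T) := by
  -- `a • S + b • T` contains a translate of `a • S` left of `p` and one of `b • T` right of `p`,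
  -- and the two overlap only in `p`.
  set p := a * sSup S + b * sInf T
  have hleft : (b * sInf T) +ᵥ a • S ⊆ (a • S + b • T) ∩ Iic p := by
    rintro _ ⟨_, ⟨s, hs, rfl⟩, rfl⟩
    refine ⟨⟨a • s, smul_mem_smul_set hs, b • sInf T, smul_mem_smul_set (hT.sInf_mem hT₀), ?_⟩, ?_⟩
    · simp only [vadd_eq_add, smul_eq_mul]; ring
    · have := le_csSup hS.bddAbove hs
      simp only [mem_Iic, vadd_eq_add, smul_eq_mul, p]; nlinarith
  have hright : (a * sSup S) +ᵥ b • T ⊆ (a • S + b • T) ∩ Ici p := by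
    rintro _ ⟨_, ⟨t, ht, rfl⟩, rfl⟩
    refine ⟨⟨a • sSup S, smul_mem_smul_set (hS.sSup_mem hS₀), b • t, smul_mem_smul_set ht, rfl⟩, ?_⟩
    have := csInf_le hT.bddBelow ht
    simp only [mem_Ici, vadd_eq_add, smul_eq_mul, p]; nlinarith
  have hnull : volume (((b * sInf T) +ᵥ a • S) ∩ ((a * sSup S) +ᵥ b • T)) = 0 :=
    measure_mono_null (fun x hx => show x = p from le_antisymm (hleft hx.1).2 (hright hx.2).2)
      (measure_singleton p)
  calc ENNReal.ofReal a * volume S + ENNReal.ofReal b * volume T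
      = volume ((b * sInf T) +ᵥ a • S) + volume ((a * sSup S) +ᵥ b • T) := by
        rw [Real.volume_vadd_smul _ _ ha, Real.volume_vadd_smul _ _ hb]
    _ = volume (((b * sInf T) +ᵥ a • S) ∪ ((a * sSup S) +ᵥ b • T)) := by
        rw [← measure_union_add_inter₀ _ ((hT.smul b).vadd _).measurableSet.nullMeasurableSet,
          hnull, add_zero]
    _ ≤ volume (a • S + b • T) :=
        measure_mono (union_subset (fun x hx => (hleft hx).1) (fun x hx => (hright hx).1))

theorem MeasurableSet.add_volume_le_volume_smul_add_smul {a b : ℝ} (ha : 0 ≤ a) (hb : 0 ≤ b)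
    (hab : a + b = 1) {S T : Set ℝ} (hS : MeasurableSet S) (hT : MeasurableSet T)
    (hS₀ : S.Nonempty) (hT₀ : T.Nonempty) (hSfin : volume S ≠ ∞) (hTfin : volume T ≠ ∞) :
    ENNReal.ofReal a * volume S + ENNReal.ofReal b * volume T ≤ volume (a • S + b • T) := by
  refine ENNReal.le_of_forall_pos_le_add fun ε hε _ => ?_
  have hε₀ : (ε : ℝ≥0∞) ≠ 0 := by positivity
  obtain ⟨s, hs⟩ := hS₀
  obtain ⟨t, ht⟩ := hT₀
  obtain ⟨S', hS'S, hS', hSε⟩ := hS.exists_isCompact_lt_add hSfin hε₀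
  obtain ⟨T', hT'T, hT', hTε⟩ := hT.exists_isCompact_lt_add hTfin hε₀
  calc ENNReal.ofReal a * volume S + ENNReal.ofReal b * volume T
      ≤ ENNReal.ofReal a * (volume (insert s S') + ε) +
          ENNReal.ofReal b * (volume (insert t T') + ε) := by
        gcongr
        · exact hSε.le.trans (by gcongr; exact subset_insert _ _)
        · exact hTε.le.trans (by gcongr; exact subset_insert _ _)
    _ = (ENNReal.ofReal a * volume (insert s S') + ENNReal.ofReal b * volume (insert t T')) +
          ENNReal.ofReal (a + b) * ε := by
        rw [ENNReal.ofReal_add ha hb]; ring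
    _ ≤ volume (a • S + b • T) + ε := by
        rw [hab, ENNReal.ofReal_one, one_mul]
        gcongr
        refine (IsCompact.add_volume_le_volume_smul_add_smul ha hb (hS'.insert s) (hT'.insert t)
          (insert_nonempty _ _) (insert_nonempty _ _)).trans (measure_mono ?_)
        gcongr
        · exact insert_subset hs hS'S
        · exact insert_subset ht hT'T

theorem add_lintegral_le_lintegral_of_min_le {a b : ℝ} (ha : 0 ≤ a) (hb : 0 ≤ b) (hab : a + b = 1)
    {u v w : ℝ → ℝ≥0∞} (hu : Measurable u) (hv : Measurable v) (hw : Measurable w)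
    (hu₁ : ⨆ s, u s = 1) (hv₁ : ⨆ s, v s = 1) (huint : ∫⁻ s, u s ≠ ∞) (hvint : ∫⁻ s, v s ≠ ∞)
    (h : ∀ s t, min (u s) (v t) ≤ w (a * s + b * t)) :
    ENNReal.ofReal a * (∫⁻ s, u s) + ENNReal.ofReal b * ∫⁻ s, v s ≤ ∫⁻ s, w s := by
  set level : (ℝ → ℝ≥0∞) → ℝ → Set ℝ := fun f t => {s | ENNReal.ofReal t ≤ f s}
  have hmeas (f : ℝ → ℝ≥0∞) : Measurable fun t => volume (level f t) :=
    Antitone.measurable fun t t' htt' => measure_mono fun s hs =>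
      (ENNReal.ofReal_le_ofReal htt').trans hs
  have hlayer {f : ℝ → ℝ≥0∞} (hf : Measurable f) (hf₁ : ⨆ s, f s = 1) :
      ∫⁻ s, f s = ∫⁻ t in Ioo 0 1, volume (level f t) := by
    rw [← lintegral_min_one_eq_lintegral_measure_superlevel _ hf]
    simp_rw [min_eq_left (hf₁ ▸ le_iSup f _)]
  have hslice : ∀ t ∈ Ioo (0 : ℝ) 1, ENNReal.ofReal a * volume (level u t) +
      ENNReal.ofReal b * volume (level v t) ≤ volume (level w t) := fun t ht => by
    have hne {f : ℝ → ℝ≥0∞} (hf₁ : ⨆ s, f s = 1) : (level f t).Nonempty := by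
      obtain ⟨s, hs⟩ := lt_iSup_iff.1 (hf₁ ▸ ENNReal.ofReal_lt_one.2 ht.2)
      exact ⟨s, hs.le⟩
    have hfin {f : ℝ → ℝ≥0∞} (hf : Measurable f) (hfint : ∫⁻ s, f s ≠ ∞) :
        volume (level f t) ≠ ∞ :=
      ne_top_of_le_ne_top (ENNReal.div_ne_top hfint (by simpa using ht.1))
        (meas_ge_le_lintegral_div hf.aemeasurable (by simpa using ht.1) ENNReal.ofReal_ne_top)
    refine (MeasurableSet.add_volume_le_volume_smul_add_smul ha hb hab
      (measurableSet_le measurable_const hu) (measurableSet_le measurable_const hv)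
      (hne hu₁) (hne hv₁) (hfin hu huint) (hfin hv hvint)).trans (measure_mono ?_)
    rintro _ ⟨_, ⟨s, hs, rfl⟩, _, ⟨s', hs', rfl⟩, rfl⟩
    exact (le_min hs hs').trans (h s s')
  calc ENNReal.ofReal a * (∫⁻ s, u s) + ENNReal.ofReal b * ∫⁻ s, v s
      = ∫⁻ t in Ioo 0 1, (ENNReal.ofReal a * volume (level u t) +
          ENNReal.ofReal b * volume (level v t)) := by
        rw [hlayer hu hu₁, hlayer hv hv₁, lintegral_add_left ((hmeas u).const_mul _),
          lintegral_const_mul _ (hmeas u), lintegral_const_mul _ (hmeas v)]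
    _ ≤ ∫⁻ t in Ioo 0 1, volume (level w t) := setLIntegral_mono (hmeas w) hslice
    _ = ∫⁻ s, min (w s) 1 := (lintegral_min_one_eq_lintegral_measure_superlevel _ hw).symm
    _ ≤ ∫⁻ s, w s := lintegral_mono fun s => min_le_left _ _

theorem lintegral_rpow_mul_lintegral_rpow_le {a b : ℝ} (ha : 0 < a) (hb : 0 < b) (hab : a + b = 1)
    {u v w : ℝ → ℝ≥0∞} (hu : Measurable u) (hv : Measurable v) (hw : Measurable w)
    (hU : ⨆ s, u s ≠ ∞) (hV : ⨆ s, v s ≠ ∞) (huint : ∫⁻ s, u s ≠ ∞) (hvint : ∫⁻ s, v s ≠ ∞)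
    (h : ∀ s t, u s ^ a * v t ^ b ≤ w (a * s + b * t)) :
    (∫⁻ s, u s) ^ a * (∫⁻ s, v s) ^ b ≤ ∫⁻ s, w s := by
  set U := ⨆ s, u s
  set V := ⨆ s, v s
  rcases eq_or_ne U 0 with hU0 | hU0
  · simp [show u = 0 from funext (ENNReal.iSup_eq_zero.1 hU0), ENNReal.zero_rpow_of_pos ha]
  rcases eq_or_ne V 0 with hV0 | hV0
  · simp [show v = 0 from funext (ENNReal.iSup_eq_zero.1 hV0), ENNReal.zero_rpow_of_pos hb]
  -- Rescale `u`, `v`, `w` so that the suprema of `u` and `v` become `1`.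
  set c := U ^ a * V ^ b
  have hc0 : c ≠ 0 := by positivity
  have hc : c ≠ ∞ := by finiteness
  have hsup {f : ℝ → ℝ≥0∞} (hf0 : ⨆ s, f s ≠ 0) (hf : ⨆ s, f s ≠ ∞) :
      ⨆ s, (⨆ s, f s)⁻¹ * f s = 1 := by
    rw [← ENNReal.mul_iSup, ENNReal.inv_mul_cancel hf0 hf]
  have hint {f : ℝ → ℝ≥0∞} (hf : Measurable f) (C : ℝ≥0∞) :
      ∫⁻ s, C * f s = C * ∫⁻ s, f s := lintegral_const_mul C hf
  have key := add_lintegral_le_lintegral_of_min_le ha.le hb.le hab (hu.const_mul U⁻¹)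
    (hv.const_mul V⁻¹) (hw.const_mul c⁻¹) (hsup hU0 hU) (hsup hV0 hV)
    (by rw [hint hu]; finiteness) (by rw [hint hv]; finiteness) fun s t => calc
      min (U⁻¹ * u s) (V⁻¹ * v t) ≤ (U⁻¹ * u s) ^ a * (V⁻¹ * v t) ^ b :=
        ENNReal.min_le_rpow_mul_rpow_s12 ha.le hb.le hab _ _
      _ = c⁻¹ * (u s ^ a * v t ^ b) := by
        rw [ENNReal.mul_rpow_of_nonneg _ _ ha.le, ENNReal.mul_rpow_of_nonneg _ _ hb.le,
          ENNReal.inv_rpow, ENNReal.inv_rpow,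
          ENNReal.mul_inv (.inr (by finiteness)) (.inl (by finiteness))]
        ring
      _ ≤ c⁻¹ * w (a * s + b * t) := by gcongr; exact h s t
  rw [hint hu, hint hv, hint hw] at key
  calc (∫⁻ s, u s) ^ a * (∫⁻ s, v s) ^ b
      = (U * (U⁻¹ * ∫⁻ s, u s)) ^ a * (V * (V⁻¹ * ∫⁻ s, v s)) ^ b := by
        rw [ENNReal.mul_inv_cancel_left hU0 hU, ENNReal.mul_inv_cancel_left hV0 hV]
    _ = c * ((U⁻¹ * ∫⁻ s, u s) ^ a * (V⁻¹ * ∫⁻ s, v s) ^ b) := by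
        rw [ENNReal.mul_rpow_of_nonneg _ _ ha.le, ENNReal.mul_rpow_of_nonneg _ _ hb.le]; ring
    _ ≤ c * (c⁻¹ * ∫⁻ s, w s) :=
        mul_le_mul_right ((ENNReal.rpow_mul_rpow_le_add ha hb hab _ _).trans key) c
    _ = ∫⁻ s, w s := ENNReal.mul_inv_cancel_left hc0 hc

section Slice

variable {n : ℕ}

def slice (A : Set (Fin (n + 1) → ℝ)) (s : ℝ) : Set (Fin n → ℝ) := {y | Fin.cons s y ∈ A}

theorem slice_eq_preimage (A : Set (Fin (n + 1) → ℝ)) (s : ℝ) :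
    slice A s = Prod.mk s ⁻¹' ((MeasurableEquiv.piFinSuccAbove (fun _ => ℝ) 0).symm ⁻¹' A) := by
  ext y
  simp only [slice, MeasurableEquiv.piFinSuccAbove_symm_apply, Fin.insertNthEquiv_zero]
  rfl

theorem volume_eq_lintegral_volume_slice {A : Set (Fin (n + 1) → ℝ)} (hA : MeasurableSet A) :
    volume A = ∫⁻ s, volume (slice A s) := by
  have hpres := (volume_preserving_piFinSuccAbove (fun _ : Fin (n + 1) => ℝ) 0).symm
  rw [← hpres.measure_preimage_equiv, Measure.volume_eq_prod,
    Measure.prod_apply (hpres.measurable hA)]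
  simp_rw [slice_eq_preimage]

theorem measurable_volume_slice {A : Set (Fin (n + 1) → ℝ)} (hA : MeasurableSet A) :
    Measurable fun s => volume (slice A s) := by
  simp_rw [slice_eq_preimage]
  exact measurable_measure_prodMk_left ((MeasurableEquiv.piFinSuccAbove _ 0).symm.measurable hA)

theorem slice_subset_image_tail (A : Set (Fin (n + 1) → ℝ)) (s : ℝ) :
    slice A s ⊆ Fin.tail '' A :=
  fun _ hy => ⟨_, hy, Fin.tail_cons _ _⟩

theorem isCompact_slice {A : Set (Fin (n + 1) → ℝ)} (hA : IsCompact A) (s : ℝ) :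
    IsCompact (slice A s) :=
  (hA.image (by fun_prop)).of_isClosed_subset
    (hA.isClosed.preimage (by fun_prop)) (slice_subset_image_tail A s)

theorem smul_slice_add_smul_slice_subset (A B : Set (Fin (n + 1) → ℝ)) (a b s t : ℝ) :
    a • slice A s + b • slice B t ⊆ slice (a • A + b • B) (a * s + b * t) := by
  rintro _ ⟨_, ⟨y, hy, rfl⟩, _, ⟨z, hz, rfl⟩, rfl⟩
  refine ⟨_, smul_mem_smul_set hy, _, smul_mem_smul_set hz, ?_⟩
  ext i
  cases i using Fin.cases <;> simp

end Slice

theorem IsCompact.volume_rpow_mul_volume_rpow_le_pi {n : ℕ} {a b : ℝ} (ha : 0 < a) (hb : 0 < b)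
    (hab : a + b = 1) {A B : Set (Fin n → ℝ)} (hA : IsCompact A) (hB : IsCompact B) :
    volume A ^ a * volume B ^ b ≤ volume (a • A + b • B) := by
  induction n with
  | zero =>
    rcases A.eq_empty_or_nonempty with rfl | ⟨x, hx⟩
    · simp [ENNReal.zero_rpow_of_pos ha]
    rcases B.eq_empty_or_nonempty with rfl | ⟨y, hy⟩
    · simp [ENNReal.zero_rpow_of_pos hb]
    have hvol {S : Set (Fin 0 → ℝ)} (hS : S.Nonempty) : volume S = 1 := by
      simp [hS.eq_univ, volume_pi]
    rw [hvol ⟨x, hx⟩, hvol ⟨y, hy⟩,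
      hvol ⟨_, add_mem_add (smul_mem_smul_set hx) (smul_mem_smul_set hy)⟩]
    simp
  | succ n ih =>
    have hsup {S : Set (Fin (n + 1) → ℝ)} (hS : IsCompact S) :
        ⨆ s, volume (slice S s) ≠ ∞ :=
      ((iSup_le fun s => measure_mono (slice_subset_image_tail S s)).trans_lt
        (hS.image (by fun_prop)).measure_lt_top).ne
    have hC : IsCompact (a • A + b • B) := (hA.smul a).add (hB.smul b)
    calc volume A ^ a * volume B ^ b
        = (∫⁻ s, volume (slice A s)) ^ a * (∫⁻ s, volume (slice B s)) ^ b := by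
          rw [volume_eq_lintegral_volume_slice hA.measurableSet,
            volume_eq_lintegral_volume_slice hB.measurableSet]
      _ ≤ ∫⁻ s, volume (slice (a • A + b • B) s) :=
          lintegral_rpow_mul_lintegral_rpow_le ha hb hab
            (measurable_volume_slice hA.measurableSet)
            (measurable_volume_slice hB.measurableSet)
            (measurable_volume_slice hC.measurableSet) (hsup hA) (hsup hB)
            (volume_eq_lintegral_volume_slice hA.measurableSet ▸ hA.measure_lt_top.ne)
            (volume_eq_lintegral_volume_slice hB.measurableSet ▸ hB.measure_lt_top.ne)
            fun s t => (ih (isCompact_slice hA s) (isCompact_slice hB t)).trans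
              (measure_mono (smul_slice_add_smul_slice_subset A B a b s t))
      _ = volume (a • A + b • B) := (volume_eq_lintegral_volume_slice hC.measurableSet).symm

theorem IsCompact.volume_rpow_mul_volume_rpow_le {n : ℕ} {a b : ℝ} (ha : 0 < a) (hb : 0 < b)
    (hab : a + b = 1) {A B : Set (EuclideanSpace ℝ (Fin n))} (hA : IsCompact A)
    (hB : IsCompact B) : volume A ^ a * volume B ^ b ≤ volume (a • A + b • B) := by
  let L := PiLp.continuousLinearEquiv 2 ℝ (fun _ : Fin n => ℝ)
  have hvol {S : Set (EuclideanSpace ℝ (Fin n))} (hS : IsCompact S) :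
      volume (L '' S) = volume S := by
    rw [L.image_eq_preimage_symm]
    exact (PiLp.volume_preserving_toLp (Fin n)).measure_preimage hS.measurableSet.nullMeasurableSet
  have := (hA.image L.continuous).volume_rpow_mul_volume_rpow_le_pi ha hb hab
    (hB.image L.continuous)
  rwa [← image_smul_set, ← image_smul_set, ← image_add, hvol hA, hvol hB,
    hvol ((hA.smul a).add (hB.smul b))] at this

theorem IsCompact.lt_volume_smul_add_smul {n : ℕ} {a b : ℝ} (ha : 0 < a) (hb : 0 < b)
    (hab : a + b = 1) {A B : Set (EuclideanSpace ℝ (Fin n))} (hA : IsCompact A)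
    (hB : IsCompact B) (hA₀ : A.Nonempty) {c : ℝ≥0∞} (hcA : c ≤ volume A) (hcB : c < volume B) :
    c < volume (a • A + b • B) := by
  rcases eq_or_ne c 0 with rfl | hc0
  · obtain ⟨p, hp⟩ := hA₀
    calc 0 < volume (a • p +ᵥ b • B) := by
          rw [measure_vadd, Measure.addHaar_smul]
          exact ENNReal.mul_pos (ENNReal.ofReal_pos.2 (by positivity)).ne' hcB.ne'
      _ ≤ volume (a • A + b • B) := by
          refine measure_mono ?_
          rintro _ ⟨_, ⟨q, hq, rfl⟩, rfl⟩
          exact ⟨_, smul_mem_smul_set hp, _, smul_mem_smul_set hq, rfl⟩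
  have hc : c ≠ ∞ := ne_top_of_lt hcB
  calc c = c ^ a * c ^ b := by
        rw [← ENNReal.rpow_add_of_nonneg _ _ ha.le hb.le, hab, ENNReal.rpow_one]
    _ < c ^ a * volume B ^ b :=
        (ENNReal.mul_lt_mul_iff_right (by positivity) (by finiteness)).2
          (ENNReal.rpow_lt_rpow hcB hb)
    _ ≤ volume A ^ a * volume B ^ b := by gcongr
    _ ≤ volume (a • A + b • B) := hA.volume_rpow_mul_volume_rpow_le ha hb hab hB

section Continuity

variable {G : Type*} [TopologicalSpace G] [AddCommGroup G] [IsTopologicalAddGroup G]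
  [MeasurableSpace G] [BorelSpace G] {μ : Measure G} [μ.IsAddRightInvariant]
  [μ.InnerRegularCompactLTTop] [IsLocallyFiniteMeasure μ]

theorem continuous_measure_inter_preimage_sub_right {N : Set G} (hN : NullMeasurableSet N μ)
    (hNfin : μ N ≠ ∞) (K : Set G) : Continuous fun x => μ (K ∩ ((· - x) ⁻¹' N)) := by
  let translate : C(G, C(G, G)) := ContinuousMap.curry ⟨fun p : G × G => p.2 - p.1, by fun_prop⟩
  have hpres (x : G) : MeasurePreserving (translate x) μ μ := measurePreserving_sub_right μ x
  refine continuous_iff_continuousAt.2 fun x₀ => ?_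
  have hsymm := tendsto_measure_symmDiff_preimage_nhds_zero (translate.continuous.tendsto x₀)
    (.of_forall hpres) (hpres x₀) hN hNfin
  have hfin : μ (K ∩ (translate x₀ ⁻¹' N)) ≠ ∞ :=
    ne_top_of_le_ne_top (by rwa [(hpres x₀).measure_preimage hN]) (measure_mono inter_subset_right)
  refine (ENNReal.tendsto_nhds hfin).2 fun ε hε => ?_
  filter_upwards [hsymm.eventually (gt_mem_nhds hε)] with x hx
  have hdiff (A B : Set G) : μ (K ∩ A) - μ (K ∩ B) ≤ μ (A ∆ B) :=
    le_measure_symmDiff.trans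
      (measure_mono (inter_symmDiff_distrib_left K A B ▸ inter_subset_right))
  refine ⟨tsub_le_iff_tsub_le.1 ?_, tsub_le_iff_left.1 ((hdiff _ _).trans hx.le)⟩
  rw [symmDiff_comm] at hx
  exact (hdiff _ _).trans hx.le

end Continuity

theorem frontier_sep_le_subset {X α : Type*} [TopologicalSpace X] [LinearOrder α]
    [TopologicalSpace α] [OrderClosedTopology α] {S : Set X} {f : X → α} {c : α}
    (hS : IsClosed S) (hf : Continuous f) (hcS : ∀ x, c < f x → x ∈ S) :
    frontier {x ∈ S | c ≤ f x} ⊆ {x ∈ S | f x = c} := by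
  rintro x ⟨hxcl, hxint⟩
  have hclosed : IsClosed {x ∈ S | c ≤ f x} := hS.inter (isClosed_le continuous_const hf)
  have hopen : {x | c < f x} ⊆ interior {x ∈ S | c ≤ f x} :=
    interior_maximal (fun y hy => ⟨hcS y hy, hy.le⟩) (isOpen_lt continuous_const hf)
  obtain ⟨hxS, hcx⟩ := hclosed.closure_eq ▸ hxcl
  exact ⟨hxS, (hcx.eq_or_lt.resolve_right fun hlt => hxint (hopen hlt)).symm⟩

theorem inter_singleton_sub_nonempty_iff {G : Type*} [AddCommGroup G] {K L : Set G} {x : G} :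
    (K ∩ ({x} - L)).Nonempty ↔ x ∈ K + L := by
  simp only [Set.Nonempty, singleton_sub, mem_inter_iff, mem_image, mem_add]
  constructor
  · rintro ⟨_, hk, l, hl, rfl⟩
    exact ⟨_, hk, l, hl, sub_add_cancel x l⟩
  · rintro ⟨k, hk, l, hl, rfl⟩
    exact ⟨k, hk, l, hl, add_sub_cancel_right k l⟩

theorem singleton_sub_eq_preimage_sub_right {G : Type*} [AddCommGroup G] (x : G) (L : Set G) :
    {x} - L = (· - x) ⁻¹' (-L) := by
  ext z
  simp only [singleton_sub, mem_image, mem_preimage, Set.mem_neg, neg_sub]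
  constructor
  · rintro ⟨l, hl, rfl⟩
    rwa [sub_sub_cancel]
  · exact fun h => ⟨_, h, sub_sub_cancel x z⟩

section Overlap

variable {n : ℕ}

noncomputable def overlap (K L : Set (EuclideanSpace ℝ (Fin n))) (x : EuclideanSpace ℝ (Fin n)) :
    ℝ≥0∞ :=
  volume (K ∩ ({x} - L))

variable {K L : Set (EuclideanSpace ℝ (Fin n))}

theorem overlap_le_volume (K L : Set (EuclideanSpace ℝ (Fin n))) (x : EuclideanSpace ℝ (Fin n)) :
    overlap K L x ≤ volume K :=
  measure_mono inter_subset_left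

theorem mem_add_of_overlap_ne_zero {x : EuclideanSpace ℝ (Fin n)} (hx : overlap K L x ≠ 0) :
    x ∈ K + L :=
  inter_singleton_sub_nonempty_iff.1 (nonempty_of_measure_ne_zero hx)

theorem continuous_overlap (K : Set (EuclideanSpace ℝ (Fin n))) (hL : IsCompact L) :
    Continuous (overlap K L) := by
  have : overlap K L = fun x => volume (K ∩ ((· - x) ⁻¹' (-L))) :=
    funext fun x => by rw [overlap, singleton_sub_eq_preimage_sub_right]
  rw [this]
  exact continuous_measure_inter_preimage_sub_right hL.neg.measurableSet.nullMeasurableSet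
    hL.neg.measure_lt_top.ne K

theorem exists_overlap_pos (hK : (interior K).Nonempty) (hL : (interior L).Nonempty) :
    ∃ x, 0 < overlap K L x := by
  obtain ⟨k, hk⟩ := hK
  obtain ⟨l, hl⟩ := hL
  refine ⟨k + l, (?_ : 0 < volume _).trans_le (measure_mono (inter_subset_inter interior_subset
    (sub_subset_sub_left interior_subset)))⟩
  refine (isOpen_interior.inter isOpen_interior.sub_left).measure_pos _ ⟨k, hk, ?_⟩
  exact ⟨k + l, rfl, l, hl, add_sub_cancel_right k l⟩

theorem smul_inter_add_smul_inter_subset (hK : Convex ℝ K) (hL : Convex ℝ L) {a b : ℝ}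
    (ha : 0 ≤ a) (hb : 0 ≤ b) (hab : a + b = 1) (y z : EuclideanSpace ℝ (Fin n)) :
    a • (K ∩ ({y} - L)) + b • (K ∩ ({z} - L)) ⊆ K ∩ ({a • y + b • z} - L) := by
  rintro _ ⟨_, ⟨p, ⟨hpK, _, rfl, l, hl, rfl⟩, rfl⟩, _, ⟨q, ⟨hqK, _, rfl, m, hm, rfl⟩, rfl⟩, rfl⟩
  refine ⟨hK hpK hqK ha hb hab, _, rfl, a • l + b • m, hL hl hm ha hb hab, ?_⟩
  simp only [smul_sub]; abel

theorem lt_overlap_smul_add_smul (hK : IsCompact K) (hKc : Convex ℝ K) (hL : IsCompact L)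
    (hLc : Convex ℝ L) {a b : ℝ} (ha : 0 < a) (hb : 0 < b) (hab : a + b = 1) {c : ℝ≥0∞}
    {y z : EuclideanSpace ℝ (Fin n)} (hy : y ∈ K + L) (hcy : c ≤ overlap K L y)
    (hcz : c < overlap K L z) : c < overlap K L (a • y + b • z) :=
  have hcompact (x : EuclideanSpace ℝ (Fin n)) : IsCompact (K ∩ ({x} - L)) :=
    hK.inter_right (singleton_sub (a := x) ▸ (hL.image (by fun_prop)).isClosed)
  (IsCompact.lt_volume_smul_add_smul ha hb hab (hcompact y) (hcompact z)
    (inter_singleton_sub_nonempty_iff.2 hy) hcy hcz).trans_le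
    (measure_mono (smul_inter_add_smul_inter_subset hKc hLc ha.le hb.le hab y z))

theorem notMem_interior_of_overlap_eq (hK : IsCompact K) (hKc : Convex ℝ K) (hL : IsCompact L)
    (hLc : Convex ℝ L) {c : ℝ≥0∞} {x x₀ : EuclideanSpace ℝ (Fin n)} (hx : overlap K L x = c)
    (hx₀ : c < overlap K L x₀) : x ∉ interior {y ∈ K + L | c ≤ overlap K L y} := by
  intro hint
  have hray : ∀ᶠ t in 𝓝[>] (1 : ℝ),
      x₀ + t • (x - x₀) ∈ interior {y ∈ K + L | c ≤ overlap K L y} := by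
    refine nhdsWithin_le_nhds (ContinuousAt.preimage_mem_nhds (by fun_prop) ?_)
    simpa using isOpen_interior.mem_nhds hint
  obtain ⟨t, ht, ht1⟩ := (hray.and self_mem_nhdsWithin).exists
  obtain ⟨hyKL, hcy⟩ := interior_subset ht
  -- `x` lies strictly between `x₀` and the point `y = x₀ + t • (x - x₀)` of the superlevel set.
  have hx_eq : t⁻¹ • (x₀ + t • (x - x₀)) + (1 - t⁻¹) • x₀ = x := by
    rw [smul_add, smul_smul, inv_mul_cancel₀ (by positivity), one_smul, sub_smul, one_smul]
    abel
  have := lt_overlap_smul_add_smul hK hKc hL hLc (inv_pos.2 (by positivity))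
    (sub_pos.2 (inv_lt_one_of_one_lt₀ ht1)) (add_sub_cancel _ _) hyKL hcy hx₀
  rw [hx_eq, hx] at this
  exact this.false

end Overlap

theorem convBody_boundary (n : ℕ) (K L : Set (EuclideanSpace ℝ (Fin n)))
    (hK : IsCompact K) (hKc : Convex ℝ K) (hKi : (interior K).Nonempty)
    (hL : IsCompact L) (hLc : Convex ℝ L) (hLi : (interior L).Nonempty)
    (θ : ℝ) (hθ : θ ∈ Set.Ico (0 : ℝ) 1) :
    frontier (convBody n θ K L) =
      {x ∈ K + L |
        volume (K ∩ ({x} - L)) =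
          ENNReal.ofReal θ * ⨆ z : EuclideanSpace ℝ (Fin n), volume (K ∩ ({z} - L))} := by
  change frontier {x ∈ K + L | ENNReal.ofReal θ * ⨆ z, overlap K L z ≤ overlap K L x} =
    {x ∈ K + L | overlap K L x = ENNReal.ofReal θ * ⨆ z, overlap K L z}
  set M := ⨆ z, overlap K L z
  have hM : M ≠ ∞ := ne_top_of_le_ne_top hK.measure_lt_top.ne (iSup_le (overlap_le_volume K L))
  have hM₀ : M ≠ 0 := by
    obtain ⟨x, hx⟩ := exists_overlap_pos hKi hLi
    exact (hx.trans_le (le_iSup _ x)).ne'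
  have hθM : ENNReal.ofReal θ * M < M := by
    simpa using (ENNReal.mul_lt_mul_iff_left hM₀ hM).2 (ENNReal.ofReal_lt_one.2 hθ.2)
  obtain ⟨x₀, hx₀⟩ := lt_iSup_iff.1 hθM
  refine subset_antisymm (frontier_sep_le_subset (hK.add hL).isClosed (continuous_overlap K hL)
    fun x hx => mem_add_of_overlap_ne_zero (pos_of_gt hx).ne') ?_
  rintro x ⟨hxKL, hx⟩
  exact ⟨subset_closure ⟨hxKL, hx.ge⟩, notMem_interior_of_overlap_eq hK hKc hL hLc hx hx₀⟩
end

section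
/- For convex bodies K, L in ℝⁿ and θ ∈ [0,1], |K +_θ L| ≥ (1 - θ^{1/n})ⁿ |K + L|. -/
/-!
Fix `a ∈ (θ^{1/n}, 1)` and pick `z` with `θ M ≤ aⁿ |K ∩ (z - L)|`, possible since `θ < aⁿ`.
For `x = k + l ∈ K + L`, convexity puts the translate `(1 - a) k + a (K ∩ (z - L))` inside
`K ∩ (a z + (1 - a) x - L)`, so this set has volume at least `aⁿ |K ∩ (z - L)| ≥ θ M`.
Hence `K +_θ L` contains the homothetic copy `a z + (1 - a)(K + L)` of `K + L`, of volume
`(1 - a)ⁿ |K + L|`; let `a` decrease to `θ^{1/n}`.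
-/

open MeasureTheory Set
open scoped Pointwise

open scoped ENNReal
open Module

theorem Set.mem_add_iff_inter_singleton_sub_nonempty {E : Type*} [AddCommGroup E]
    {K L : Set E} {z : E} : z ∈ K + L ↔ (K ∩ ({z} - L)).Nonempty := by
  constructor
  · rintro ⟨k, hk, l, hl, rfl⟩
    exact ⟨k, hk, _, rfl, l, hl, add_sub_cancel_right k l⟩
  · rintro ⟨_, hk, _, rfl, l, hl, rfl⟩
    exact ⟨_, hk, l, hl, sub_add_cancel _ l⟩

theorem Convex.vadd_smul_inter_singleton_sub_subset {E : Type*} [AddCommGroup E] [Module ℝ E]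
    {K L : Set E} (hK : Convex ℝ K) (hL : Convex ℝ L) {k l : E} (hk : k ∈ K) (hl : l ∈ L)
    (z : E) {a : ℝ} (ha0 : 0 ≤ a) (ha1 : a ≤ 1) :
    (1 - a) • k +ᵥ a • (K ∩ ({z} - L)) ⊆ K ∩ ({a • z + (1 - a) • (k + l)} - L) := by
  rintro _ ⟨_, ⟨b, ⟨hb, _, rfl, l', hl', rfl⟩, rfl⟩, rfl⟩
  refine ⟨hK hk hb (sub_nonneg.2 ha1) ha0 (by ring), _, rfl, (1 - a) • l + a • l',
    hL hl hl' (sub_nonneg.2 ha1) ha0 (by ring), ?_⟩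
  simp only [vadd_eq_add]
  module

section AddCommGroup

variable {E : Type*} [AddCommGroup E] [MeasurableSpace E] (μ : Measure E) {K L : Set E}

theorem iSup_measure_inter_singleton_sub_le [μ.IsAddLeftInvariant] :
    ⨆ z, μ (K ∩ ({z} - L)) ≤ μ (K + L) := by
  refine iSup_le fun z => ?_
  rcases (K ∩ ({z} - L)).eq_empty_or_nonempty with h | ⟨_, -, _, -, l, hl, -⟩
  · rw [h, measure_empty]
    exact zero_le
  calc μ (K ∩ ({z} - L)) = μ (l +ᵥ (K ∩ ({z} - L))) := (measure_vadd μ l _).symm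
    _ ≤ μ (K + L) := measure_mono <| by
      rintro _ ⟨k, ⟨hk, -⟩, rfl⟩
      exact ⟨k, hk, l, hl, add_comm k l⟩

theorem exists_mem_add_mul_iSup_le_mul_measure (hKL : (K + L).Nonempty)
    (hM : ⨆ y, μ (K ∩ ({y} - L)) ≠ ∞) {c d : ℝ≥0∞} (hcd : c < d) :
    ∃ z ∈ K + L, c * ⨆ y, μ (K ∩ ({y} - L)) ≤ d * μ (K ∩ ({z} - L)) := by
  rcases eq_or_ne (⨆ y, μ (K ∩ ({y} - L))) 0 with hM0 | hM0
  · obtain ⟨z, hz⟩ := hKL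
    exact ⟨z, hz, by rw [hM0, mul_zero]; exact zero_le⟩
  have : c * ⨆ y, μ (K ∩ ({y} - L)) < ⨆ y, d * μ (K ∩ ({y} - L)) := by
    rw [← ENNReal.mul_iSup]
    exact ENNReal.mul_lt_mul_left hM0 hM hcd
  obtain ⟨z, hz⟩ := lt_iSup_iff.1 this
  refine ⟨z, mem_add_iff_inter_singleton_sub_nonempty.2 (nonempty_of_measure_ne_zero (μ := μ) ?_),
    hz.le⟩
  intro h
  rw [h, mul_zero] at hz
  exact not_lt_zero hz

end AddCommGroup

section FiniteDimensional

variable {E : Type*} [NormedAddCommGroup E] [NormedSpace ℝ E] [MeasurableSpace E] [BorelSpace E]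
  [FiniteDimensional ℝ E] (μ : Measure E) [μ.IsAddHaarMeasure] {K L : Set E}

theorem Convex.ofReal_pow_mul_measure_inter_singleton_sub_le (hK : Convex ℝ K)
    (hL : Convex ℝ L) (z : E) {x : E} (hx : x ∈ K + L) {a : ℝ} (ha0 : 0 ≤ a) (ha1 : a ≤ 1) :
    ENNReal.ofReal (a ^ finrank ℝ E) * μ (K ∩ ({z} - L)) ≤
      μ (K ∩ ({a • z + (1 - a) • x} - L)) := by
  obtain ⟨k, hk, l, hl, rfl⟩ := hx
  calc ENNReal.ofReal (a ^ finrank ℝ E) * μ (K ∩ ({z} - L))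
      = μ ((1 - a) • k +ᵥ a • (K ∩ ({z} - L))) := by
        rw [measure_vadd, Measure.addHaar_smul_of_nonneg μ ha0]
    _ ≤ μ (K ∩ ({a • z + (1 - a) • (k + l)} - L)) :=
        measure_mono (hK.vadd_smul_inter_singleton_sub_subset hL hk hl z ha0 ha1)

end FiniteDimensional

namespace convBody

variable {n : ℕ} {θ : ℝ} {K L : Set (EuclideanSpace ℝ (Fin n))}

theorem subset_add : convBody n θ K L ⊆ K + L := fun _ hx => hx.1

theorem zero_eq_add (hθ : θ ≤ 1) (K L : Set (EuclideanSpace ℝ (Fin 0))) :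
    convBody 0 θ K L = K + L := by
  refine subset_add.antisymm fun x hx => ⟨hx, ?_⟩
  calc ENNReal.ofReal θ * ⨆ z, volume (K ∩ ({z} - L))
      ≤ ⨆ z, volume (K ∩ ({z} - L)) := mul_le_of_le_one_left' (ENNReal.ofReal_le_one.2 hθ)
    _ ≤ volume (K ∩ ({x} - L)) := iSup_le fun z => by rw [Subsingleton.elim z x]

theorem vadd_smul_add_subset (hK : Convex ℝ K) (hL : Convex ℝ L) {z : EuclideanSpace ℝ (Fin n)}
    (hz : z ∈ K + L) {a : ℝ} (ha0 : 0 ≤ a) (ha1 : a ≤ 1)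
    (hθz : ENNReal.ofReal θ * ⨆ y, volume (K ∩ ({y} - L)) ≤
      ENNReal.ofReal (a ^ n) * volume (K ∩ ({z} - L))) :
    a • z +ᵥ (1 - a) • (K + L) ⊆ convBody n θ K L := by
  rintro _ ⟨_, ⟨x, hx, rfl⟩, rfl⟩
  refine ⟨(hK.add hL) hz hx ha0 (sub_nonneg.2 ha1) (by ring), hθz.trans ?_⟩
  simpa only [vadd_eq_add, finrank_euclideanSpace_fin] using
    hK.ofReal_pow_mul_measure_inter_singleton_sub_le volume hL z hx ha0 ha1

theorem ofReal_mul_volume_add_le_volume (hK : Convex ℝ K) (hL : Convex ℝ L)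
    (hV : volume (K + L) ≠ ∞) {a : ℝ} (ha0 : 0 < a) (ha1 : a ≤ 1) (hθa : θ < a ^ n) :
    ENNReal.ofReal ((1 - a) ^ n) * volume (K + L) ≤ volume (convBody n θ K L) := by
  rcases (K + L).eq_empty_or_nonempty with hKL | hKL
  · rw [hKL, measure_empty, mul_zero]
    exact zero_le
  obtain ⟨z, hz, hθz⟩ := exists_mem_add_mul_iSup_le_mul_measure volume hKL
    (ne_top_of_le_ne_top hV (iSup_measure_inter_singleton_sub_le volume))
    (ENNReal.ofReal_lt_ofReal_iff'.2 ⟨hθa, pow_pos ha0 n⟩)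
  calc ENNReal.ofReal ((1 - a) ^ n) * volume (K + L)
      = volume (a • z +ᵥ (1 - a) • (K + L)) := by
        rw [measure_vadd, Measure.addHaar_smul_of_nonneg _ (sub_nonneg.2 ha1),
          finrank_euclideanSpace_fin]
    _ ≤ volume (convBody n θ K L) := measure_mono (vadd_smul_add_subset hK hL hz ha0.le ha1 hθz)

theorem one_sub_rpow_inv_pow_mul_toReal_volume_le (hn : n ≠ 0) (hK : Convex ℝ K)
    (hL : Convex ℝ L) (hθ0 : 0 ≤ θ) (hθ1 : θ ≤ 1) :
    (1 - θ ^ (n : ℝ)⁻¹) ^ n * (volume (K + L)).toReal ≤ (volume (convBody n θ K L)).toReal := by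
  rcases eq_or_ne (volume (K + L)) ∞ with hV | hV
  · rw [hV, ENNReal.toReal_top, mul_zero]
    exact ENNReal.toReal_nonneg
  set t := θ ^ (n : ℝ)⁻¹
  have ht0 : 0 ≤ t := Real.rpow_nonneg hθ0 _
  have ht1 : t ≤ 1 := Real.rpow_le_one hθ0 hθ1 (by positivity)
  rcases ht1.eq_or_lt with ht1 | ht1
  · rw [ht1, sub_self, zero_pow hn, zero_mul]
    exact ENNReal.toReal_nonneg
  have hC : volume (convBody n θ K L) ≠ ∞ := ne_top_of_le_ne_top hV (measure_mono subset_add)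
  have key : Ioo t 1 ⊆
      {a | (1 - a) ^ n * (volume (K + L)).toReal ≤ (volume (convBody n θ K L)).toReal} := by
    rintro a ⟨hta, ha1⟩
    have hθa : θ < a ^ n := Real.rpow_inv_natCast_pow hθ0 hn ▸ pow_lt_pow_left₀ hta ht0 hn
    have := ENNReal.toReal_mono hC
      (ofReal_mul_volume_add_le_volume hK hL hV (ht0.trans_lt hta) ha1.le hθa)
    rwa [ENNReal.toReal_mul, ENNReal.toReal_ofReal (pow_nonneg (sub_nonneg.2 ha1.le) n)] at this
  have hclosed : IsClosed
      {a : ℝ | (1 - a) ^ n * (volume (K + L)).toReal ≤ (volume (convBody n θ K L)).toReal} :=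
    isClosed_le (by fun_prop) continuous_const
  exact hclosed.closure_subset_iff.2 key (closure_Ioo ht1.ne ▸ left_mem_Icc.2 ht1.le)

end convBody

theorem convBody_volume_lower_bound_general (n : ℕ) (K L : Set (EuclideanSpace ℝ (Fin n)))
    (hKc : Convex ℝ K) (hLc : Convex ℝ L)
    (θ : ℝ) (hθ : θ ∈ Set.Icc (0 : ℝ) 1) :
    (volume (convBody n θ K L)).toReal ≥
      (1 - θ ^ ((n : ℝ)⁻¹)) ^ n * (volume (K + L)).toReal := by
  obtain ⟨hθ0, hθ1⟩ := hθ
  rcases eq_or_ne n 0 with rfl | hn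
  · rw [convBody.zero_eq_add hθ1, pow_zero, one_mul]
  exact convBody.one_sub_rpow_inv_pow_mul_toReal_volume_le hn hKc hLc hθ0 hθ1

theorem convBody_volume_lower_bound (n : ℕ) (K L : Set (EuclideanSpace ℝ (Fin n)))
    (hK : IsCompact K) (hKc : Convex ℝ K) (hKi : (interior K).Nonempty)
    (hL : IsCompact L) (hLc : Convex ℝ L) (hLi : (interior L).Nonempty)
    (θ : ℝ) (hθ : θ ∈ Set.Icc (0 : ℝ) 1) :
    (volume (convBody n θ K L)).toReal ≥
      (1 - θ ^ ((n : ℝ)⁻¹)) ^ n * (volume (K + L)).toReal :=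
  convBody_volume_lower_bound_general n K L hKc hLc θ hθ
end

section
/- Let K, L be convex bodies in ℝⁿ with M(K,L) = |K ∩ (-L)|. If a ∈ K and b ∈ L, then a + (1 - ‖a‖_K)K ∩ (1 - ‖b‖_L)(-L) ⊆ K ∩ (a + b - L), and consequently |K ∩ (a + b - L)| ≥ |(1 - ‖a‖_K)K ∩ (1 - ‖b‖_L)(-L)|. -/
open MeasureTheory Set Filter
open scoped Pointwise

section Gauge

variable {E : Type*} [AddCommGroup E] [Module ℝ E] {K : Set E} {a k : E}

lemma mem_smul_of_gauge_lt (hK : StarConvex ℝ 0 K) (ha : a ∈ K) {s : ℝ}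
    (hs : gauge K a < s) : a ∈ s • K := by
  rw [gauge_def] at hs
  obtain ⟨r, ⟨hr0, x, hx, rfl⟩, hrs⟩ :=
    exists_lt_of_csInf_lt (s := {r ∈ Ioi 0 | a ∈ r • K}) ⟨1, one_pos, by simpa using ha⟩ hs
  have hs0 : 0 < s := hr0.trans hrs
  refine ⟨(r / s) • x, hK.smul_mem hx (div_nonneg hr0.le hs0.le) ((div_le_one hs0).mpr hrs.le), ?_⟩
  simp only [smul_smul, mul_div_cancel₀ r hs0.ne']

lemma add_one_sub_gauge_smul_mem [TopologicalSpace E] [ContinuousAdd E] [ContinuousSMul ℝ E]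
    (hKc : Convex ℝ K) (hKcl : IsClosed K) (hK0 : (0 : E) ∈ K) (ha : a ∈ K) (hk : k ∈ K) :
    a + (1 - gauge K a) • k ∈ K := by
  -- Above the gauge, `a ∈ s • K` and `s • K + (1 - s) • K = K`; then pass to the limit `s ↓ ‖a‖_K`.
  have above : ∀ s ∈ Ioc (gauge K a) 1, a + (1 - s) • k ∈ K := fun s ⟨hs, hs1⟩ => by
    have := add_mem_add (mem_smul_of_gauge_lt (hKc.starConvex hK0) ha hs)
      (smul_mem_smul_set (a := 1 - s) hk)
    rwa [← hKc.add_smul (hs.le.trans' (gauge_nonneg a)) (sub_nonneg.2 hs1), add_sub_cancel,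
      one_smul] at this
  rcases (gauge_le_one_of_mem ha).eq_or_lt with h | h
  · simpa [h] using ha
  · refine hKcl.mem_of_tendsto ?_ (eventually_of_mem (Ioc_mem_nhdsGT h) above)
    exact tendsto_nhdsWithin_of_tendsto_nhds
      ((by fun_prop : Continuous fun s : ℝ => a + (1 - s) • k).tendsto _)

lemma add_image_smul_inter_smul_neg_subset [TopologicalSpace E] [ContinuousAdd E]
    [ContinuousSMul ℝ E] {L : Set E} {b : E}
    (hKc : Convex ℝ K) (hKcl : IsClosed K) (hK0 : (0 : E) ∈ K)
    (hLc : Convex ℝ L) (hLcl : IsClosed L) (hL0 : (0 : E) ∈ L) (ha : a ∈ K) (hb : b ∈ L) :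
    (fun y => a + y) '' ((1 - gauge K a) • K ∩ (1 - gauge L b) • (-L)) ⊆
      K ∩ ({a + b} - L) := by
  rintro _ ⟨_, ⟨⟨k, hk, rfl⟩, ⟨m, hm, hmk⟩⟩, rfl⟩
  refine ⟨add_one_sub_gauge_smul_mem hKc hKcl hK0 ha hk, a + b, rfl,
    b + (1 - gauge L b) • -m, add_one_sub_gauge_smul_mem hLc hLcl hL0 hb hm, ?_⟩
  simp only [← hmk, smul_neg]
  abel

end Gauge

theorem gauge_intersection_inclusion_general (n : ℕ) (K L : Set (EuclideanSpace ℝ (Fin n)))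
    (hK : IsCompact K) (hKc : Convex ℝ K) (hK0 : (0 : EuclideanSpace ℝ (Fin n)) ∈ K)
    (hL : IsCompact L) (hLc : Convex ℝ L) (hL0 : (0 : EuclideanSpace ℝ (Fin n)) ∈ L)
    (a b : EuclideanSpace ℝ (Fin n)) (ha : a ∈ K) (hb : b ∈ L) :
    ((fun y => a + y) '' ((1 - gauge K a) • K ∩ (1 - gauge L b) • (-L)) ⊆
        K ∩ ({a + b} - L)) ∧
      volume (K ∩ ({a + b} - L)) ≥
        volume ((1 - gauge K a) • K ∩ (1 - gauge L b) • (-L)) := by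
  have hsub := add_image_smul_inter_smul_neg_subset hKc hK.isClosed hK0 hLc hL.isClosed hL0 ha hb
  refine ⟨hsub, ?_⟩
  calc volume ((1 - gauge K a) • K ∩ (1 - gauge L b) • (-L))
      = volume ((fun y => a + y) '' ((1 - gauge K a) • K ∩ (1 - gauge L b) • (-L))) := by
        rw [image_add_left, measure_preimage_add]
    _ ≤ volume (K ∩ ({a + b} - L)) := measure_mono hsub

theorem gauge_intersection_inclusion (n : ℕ) (K L : Set (EuclideanSpace ℝ (Fin n)))
    (hK : IsCompact K) (hKc : Convex ℝ K) (hKi : (interior K).Nonempty) (hK0 : (0 : EuclideanSpace ℝ (Fin n)) ∈ K)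
    (hL : IsCompact L) (hLc : Convex ℝ L) (hLi : (interior L).Nonempty) (hL0 : (0 : EuclideanSpace ℝ (Fin n)) ∈ L)
    (hM : (⨆ z : EuclideanSpace ℝ (Fin n), volume (K ∩ ({z} - L))) = volume (K ∩ (-L)))
    (a b : EuclideanSpace ℝ (Fin n)) (ha : a ∈ K) (hb : b ∈ L) :
    ((fun y => a + y) '' ((1 - gauge K a) • K ∩ (1 - gauge L b) • (-L)) ⊆
        K ∩ ({a + b} - L)) ∧
      volume (K ∩ ({a + b} - L)) ≥
        volume ((1 - gauge K a) • K ∩ (1 - gauge L b) • (-L)) :=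
  gauge_intersection_inclusion_general n K L hK hKc hK0 hL hLc hL0 a b ha hb
end

section
/- Let K, L be convex bodies in ℝⁿ with M(K,L) = |K ∩ (-L)|. Then ∫₀¹ |K +_θ L| dθ = |K|·|L| / M(K,L). -/
open MeasureTheory Set
open scoped Pointwise

/-!
With `f x = |K ∩ (x - L)|` and `M = sup f`, Fubini (through the shear `(x, y) ↦ (y, x - y)`)
gives `∫ f = |K| |L|`. For `θ > 0` the convolution body `K +_θ L` is exactly the superlevel
set `{f ≥ θ M}`, because `f x > 0` already forces `x ∈ K + L`; integrating the measures of these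
superlevel sets over `θ ∈ (0, 1]` is the layer-cake formula for `∫ f / M`.
-/

open scoped ENNReal

section AddCommGroup

variable {G : Type*} [AddCommGroup G]

theorem mem_singleton_sub_iff {x y : G} {L : Set G} : y ∈ {x} - L ↔ x - y ∈ L := by
  rw [singleton_sub, mem_image]
  constructor
  · rintro ⟨z, hz, rfl⟩
    rwa [sub_sub_cancel]
  · exact fun h => ⟨x - y, h, sub_sub_cancel x y⟩

theorem mem_add_of_inter_singleton_sub_nonempty {K L : Set G} {x : G}
    (h : (K ∩ ({x} - L)).Nonempty) : x ∈ K + L := by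
  obtain ⟨y, hyK, hyL⟩ := h
  exact ⟨y, hyK, x - y, mem_singleton_sub_iff.1 hyL, add_sub_cancel y x⟩

theorem prodMk_preimage_sub_swap_preimage_prod (K L : Set G) (x : G) :
    Prod.mk x ⁻¹' ((fun z : G × G => (z.2, z.1 - z.2)) ⁻¹' K ×ˢ L) = K ∩ ({x} - L) := by
  ext y
  simp only [mem_inter_iff, mem_singleton_sub_iff, mem_preimage, mem_prod]

variable [MeasurableSpace G] [MeasurableAdd₂ G] [MeasurableNeg G] (μ : Measure G) [SFinite μ]
  {K L : Set G}

theorem measurable_measure_inter_singleton_sub (hK : MeasurableSet K) (hL : MeasurableSet L) :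
    Measurable fun x => μ (K ∩ ({x} - L)) := by
  simp_rw [← prodMk_preimage_sub_swap_preimage_prod]
  exact measurable_measure_prodMk_left
    ((measurable_snd.prodMk (measurable_fst.sub measurable_snd)) (hK.prod hL))

theorem lintegral_measure_inter_singleton_sub [μ.IsAddRightInvariant] (hK : MeasurableSet K)
    (hL : MeasurableSet L) :
    ∫⁻ x, μ (K ∩ ({x} - L)) ∂μ = μ K * μ L := by
  have hshear := measurePreserving_prod_sub_swap μ μ
  rw [← Measure.prod_prod, ← hshear.measure_preimage (hK.prod hL).nullMeasurableSet,
    Measure.prod_apply (hshear.measurable (hK.prod hL))]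
  simp_rw [prodMk_preimage_sub_swap_preimage_prod]

end AddCommGroup

theorem volume_setOf_ofReal_le_inter_Ioc {a : ℝ≥0∞} (ha : a ≤ 1) :
    volume ({θ : ℝ | ENNReal.ofReal θ ≤ a} ∩ Ioc 0 1) = a := by
  have ha' : a ≠ ∞ := ne_top_of_le_ne_top ENNReal.one_ne_top ha
  have ha1 : a.toReal ≤ 1 := ENNReal.toReal_le_of_le_ofReal zero_le_one (by simpa using ha)
  have hset : {θ : ℝ | ENNReal.ofReal θ ≤ a} ∩ Ioc 0 1 = Ioc 0 a.toReal := by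
    ext θ
    simp only [mem_inter_iff, mem_ofPred_eq, mem_Ioc, ENNReal.ofReal_le_iff_le_toReal ha']
    constructor
    · rintro ⟨h, h0, -⟩
      exact ⟨h0, h⟩
    · rintro ⟨h0, h⟩
      exact ⟨h, h0, h.trans ha1⟩
  rw [hset, Real.volume_Ioc, sub_zero, ENNReal.ofReal_toReal ha']

theorem setLIntegral_Ioc_measure_superlevel {α : Type*} [MeasurableSpace α] (μ : Measure α)
    [SFinite μ] {f : α → ℝ≥0∞} (hf : Measurable f) {M : ℝ≥0∞} (hM0 : M ≠ 0) (hM : M ≠ ∞)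
    (hfM : ∀ x, f x ≤ M) :
    ∫⁻ θ in Ioc (0 : ℝ) 1, μ {x | ENNReal.ofReal θ * M ≤ f x} = (∫⁻ x, f x ∂μ) / M := by
  set E := {p : ℝ × α | ENNReal.ofReal p.1 ≤ f p.2 / M}
  have hE : MeasurableSet E := measurableSet_le
    (ENNReal.measurable_ofReal.comp measurable_fst) ((hf.comp measurable_snd).div_const M)
  have hslice : ∀ θ : ℝ, {x | ENNReal.ofReal θ * M ≤ f x} = Prod.mk θ ⁻¹' E := fun θ => by
    ext x
    simp [E, ENNReal.le_div_iff_mul_le (Or.inl hM0) (Or.inl hM)]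
  calc ∫⁻ θ in Ioc (0 : ℝ) 1, μ {x | ENNReal.ofReal θ * M ≤ f x}
      = ((volume.restrict (Ioc (0 : ℝ) 1)).prod μ) E := by
        simp_rw [Measure.prod_apply hE, hslice]
    _ = ∫⁻ x, f x / M ∂μ := by
        rw [Measure.prod_apply_symm hE]
        congr! with x
        rw [Measure.restrict_apply (measurable_prodMk_right hE)]
        exact volume_setOf_ofReal_le_inter_Ioc
          (ENNReal.div_le_of_le_mul (by simpa using hfM x))
    _ = (∫⁻ x, f x ∂μ) / M := by
        simp_rw [div_eq_mul_inv]
        exact lintegral_mul_const _ hf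

section convBody

variable {n : ℕ} {K L : Set (EuclideanSpace ℝ (Fin n))}

theorem convBody_subset_add (θ : ℝ) : convBody n θ K L ⊆ K + L := fun _ hx => hx.1

theorem antitone_convBody : Antitone fun θ => convBody n θ K L :=
  fun _ _ hθ _ hx => ⟨hx.1, (mul_le_mul_left (ENNReal.ofReal_le_ofReal hθ) _).trans hx.2⟩

theorem convBody_eq_setOf {θ : ℝ} (hθ : 0 < θ)
    (hM : (⨆ z, volume (K ∩ ({z} - L))) ≠ 0) :
    convBody n θ K L =
      {x | ENNReal.ofReal θ * (⨆ z, volume (K ∩ ({z} - L))) ≤ volume (K ∩ ({x} - L))} := by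
  refine subset_antisymm (fun _ hx => hx.2) fun x hx => ⟨?_, hx⟩
  refine mem_add_of_inter_singleton_sub_nonempty (nonempty_of_measure_ne_zero (μ := volume) ?_)
  exact ((ENNReal.mul_pos (ENNReal.ofReal_pos.2 hθ).ne' hM).trans_le hx).ne'

end convBody

theorem convBody_integral_volume_general (n : ℕ) (K L : Set (EuclideanSpace ℝ (Fin n)))
    (hK : IsCompact K) (hKi : (interior K).Nonempty)
    (hL : IsCompact L) (hLi : (interior L).Nonempty)
    (hM : (⨆ z : EuclideanSpace ℝ (Fin n), volume (K ∩ ({z} - L))) = volume (K ∩ (-L))) :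
    ∫ θ in (0 : ℝ)..1, (volume (convBody n θ K L)).toReal =
      (volume K).toReal * (volume L).toReal / (volume (K ∩ (-L))).toReal := by
  set f := fun x : EuclideanSpace ℝ (Fin n) => volume (K ∩ ({x} - L))
  have hfK : ∀ x, f x ≤ volume K := fun x => measure_mono inter_subset_left
  have hfub : ∫⁻ x, f x = volume K * volume L :=
    lintegral_measure_inter_singleton_sub _ hK.measurableSet hL.measurableSet
  have hS_top : (⨆ z, f z) ≠ ∞ := ((iSup_le hfK).trans_lt hK.measure_lt_top).ne
  have hS0 : (⨆ z, f z) ≠ 0 := by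
    intro h
    refine mul_ne_zero (Measure.measure_pos_of_nonempty_interior volume hKi).ne'
      (Measure.measure_pos_of_nonempty_interior volume hLi).ne' ?_
    simp [← hfub, ENNReal.iSup_eq_zero.1 h]
  have hfin : ∀ θ, volume (convBody n θ K L) < ∞ := fun θ =>
    (measure_mono (convBody_subset_add θ)).trans_lt (hK.add hL).measure_lt_top
  have hanti : Antitone fun θ => volume (convBody n θ K L) :=
    fun _ _ hθ => measure_mono (antitone_convBody hθ)
  rw [intervalIntegral.integral_of_le zero_le_one, ← ENNReal.toReal_mul, ← ENNReal.toReal_div,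
    integral_toReal hanti.measurable.aemeasurable (ae_of_all _ hfin),
    setLIntegral_congr_fun measurableSet_Ioc fun θ hθ => by rw [convBody_eq_setOf hθ.1 hS0],
    setLIntegral_Ioc_measure_superlevel _ (measurable_measure_inter_singleton_sub _
      hK.measurableSet hL.measurableSet) hS0 hS_top (le_iSup f), hfub, hM]

theorem convBody_integral_volume (n : ℕ) (K L : Set (EuclideanSpace ℝ (Fin n)))
    (hK : IsCompact K) (hKc : Convex ℝ K) (hKi : (interior K).Nonempty)
    (hL : IsCompact L) (hLc : Convex ℝ L) (hLi : (interior L).Nonempty)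
    (hM : (⨆ z : EuclideanSpace ℝ (Fin n), volume (K ∩ ({z} - L))) = volume (K ∩ (-L))) :
    ∫ θ in (0 : ℝ)..1, (volume (convBody n θ K L)).toReal =
      (volume K).toReal * (volume L).toReal / (volume (K ∩ (-L))).toReal :=
  convBody_integral_volume_general n K L hK hKi hL hLi hM
end

section
/- If K and L are n-dimensional convex bodies in ℝⁿ such that the Minkowski sum K + L is an n-dimensional simplex, then K and L are both n-dimensional simplices that are homothetic to each other. -/
open Set
open scoped Pointwise

/-- `S` is an `n`-dimensional simplex in `ℝⁿ`: the convex hull of `n+1` affinely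
independent points. -/
def IsSimplex (n : ℕ) (S : Set (EuclideanSpace ℝ (Fin n))) : Prop :=
  ∃ p : Fin (n + 1) → EuclideanSpace ℝ (Fin n),
    AffineIndependent ℝ p ∧ S = convexHull ℝ (Set.range p)

/-- `A` and `B` are homothetic: `B = z + λ • A` for some `z` and `λ > 0`. -/
def Homothetic (n : ℕ) (A B : Set (EuclideanSpace ℝ (Fin n))) : Prop :=
  ∃ (z : EuclideanSpace ℝ (Fin n)) (l : ℝ), 0 < l ∧ B = (fun x => z + l • x) '' A

/-!
Write `K + L = {x | ∀ i, 0 ≤ λᵢ x}` in the barycentric coordinates `λᵢ` of its vertices, and let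
`μᵢ`, `νᵢ` be the minima of `λᵢ` on `K` and on `L`. The sets `K' = {λ ≥ μ}` and `L' = {λ ≥ ν}`
contain `K` and `L`, and `K' + L' ⊆ K + L`: since `λᵢ (x + y) = λᵢ x + λᵢ y - λᵢ 0` and the sum of
the two minimisers lies in `K + L`, we get `μᵢ + νᵢ ≥ λᵢ 0`. Minkowski cancellation
(`C + B ⊆ A + B → C ⊆ A` for `A` closed convex and `B` compact, by separation) then gives
`K = K'` and `L = L'`. A set `{λ ≥ μ}` with nonempty interior has `∑ μᵢ < 1`, and is then the
image of `K + L` under `x ↦ t + (1 - ∑ μᵢ) • x`.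
-/

theorem subset_of_add_subset_add_right {E : Type*} [TopologicalSpace E] [AddCommGroup E]
    [Module ℝ E] [IsTopologicalAddGroup E] [ContinuousSMul ℝ E] [LocallyConvexSpace ℝ E]
    {A B C : Set E} (hA : IsClosed A) (hAc : Convex ℝ A) (hB : IsCompact B) (hBne : B.Nonempty)
    (h : C + B ⊆ A + B) : C ⊆ A := by
  intro x hxC
  by_contra hxA
  obtain ⟨f, u, hfx, hfA⟩ := geometric_hahn_banach_point_closed hAc hA hxA
  obtain ⟨y, hyB, hy⟩ := hB.exists_isMinOn hBne f.continuous.continuousOn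
  obtain ⟨a, ha, b, hb, hab⟩ := mem_add.mp (h (add_mem_add hxC hyB))
  have hsum : f a + f b = f x + f y := by rw [← map_add, ← map_add, hab]
  have hyb : f y ≤ f b := hy hb
  linarith [hfA a ha]

theorem AffineMap.map_add_smul {k V W : Type*} [Ring k] [AddCommGroup V] [Module k V]
    [AddCommGroup W] [Module k W] (g : V →ᵃ[k] W) (t x : V) (a : k) :
    g (t + a • x) = g t + a • (g x - g 0) := by
  have hx : g.linear x = g x - g 0 := by simpa using g.linearMap_vsub x 0
  rw [add_comm t, ← vadd_eq_add, g.map_vadd, g.linear.map_smul, hx, vadd_eq_add, add_comm]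

namespace AffineBasis

variable {ι : Type*}

section Module

variable {V : Type*} [AddCommGroup V] [Module ℝ V] (b : AffineBasis ι ℝ V)

def coordGE (a : ι → ℝ) : Set V := {x | ∀ i, a i ≤ b.coord i x}

theorem convexHull_eq_coordGE_zero : convexHull ℝ (range b) = b.coordGE 0 :=
  b.convexHull_eq_nonneg_coord

theorem coord_add (i : ι) (x y : V) :
    b.coord i (x + y) = b.coord i x + b.coord i y - b.coord i 0 := by
  simpa [sub_eq_add_neg, add_assoc] using (b.coord i).map_add_smul x y 1

theorem coordGE_add_coordGE_subset {a a' c : ι → ℝ} (h : ∀ i, c i + b.coord i 0 ≤ a i + a' i) :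
    b.coordGE a + b.coordGE a' ⊆ b.coordGE c := by
  rintro _ ⟨x, hx, y, hy, rfl⟩ i
  rw [coord_add]
  linarith [hx i, hy i, h i]

variable [Fintype ι]

theorem coordGE_subsingleton {a : ι → ℝ} (h : 1 ≤ ∑ i, a i) : (b.coordGE a).Subsingleton := by
  have hcoord : ∀ x ∈ b.coordGE a, ∀ i, b.coord i x = a i := by
    intro x hx
    have hsum : ∑ i, (b.coord i x - a i) = 0 := by
      refine le_antisymm ?_ (Finset.sum_nonneg fun i _ => sub_nonneg.mpr (hx i))
      rw [Finset.sum_sub_distrib, b.sum_coord_apply_eq_one]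
      linarith
    intro i
    have := (Finset.sum_eq_zero_iff_of_nonneg fun i _ => sub_nonneg.mpr (hx i)).mp hsum i
      (Finset.mem_univ i)
    linarith
  intro x hx y hy
  exact b.ext_elem fun i => (hcoord x hx i).trans (hcoord y hy i).symm

theorem exists_coordGE_eq_image {a : ι → ℝ} (h : ∑ i, a i < 1) :
    ∃ t : V, b.coordGE a = (fun x => t + (1 - ∑ i, a i) • x) '' b.coordGE 0 := by
  classical
  set α := 1 - ∑ i, a i
  have hα : 0 < α := sub_pos.mpr h
  set w : ι → ℝ := fun i => a i + α * b.coord i 0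
  have hw : ∑ i, w i = 1 := by
    simp only [w, Finset.sum_add_distrib, ← Finset.mul_sum, b.sum_coord_apply_eq_one, α]
    ring
  set t := Finset.univ.affineCombination ℝ b w
  have hcoord : ∀ i x, b.coord i (t + α • x) = a i + α * b.coord i x := by
    intro i x
    rw [(b.coord i).map_add_smul, b.coord_apply_combination_of_mem (Finset.mem_univ i) hw]
    simp only [w, smul_eq_mul]
    ring
  refine ⟨t, Set.ext fun y => ?_⟩
  obtain ⟨x, rfl⟩ : ∃ x, t + α • x = y :=
    ⟨α⁻¹ • (y - t), by rw [smul_smul, mul_inv_cancel₀ hα.ne', one_smul, add_sub_cancel]⟩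
  have hinj : Function.Injective fun x : V => t + α • x :=
    (add_right_injective t).comp (smul_right_injective V hα.ne')
  rw [hinj.mem_set_image]
  refine forall_congr' fun i => ?_
  rw [hcoord, le_add_iff_nonneg_right, mul_nonneg_iff_of_pos_left hα]
  rfl

end Module

section Normed

variable {V : Type*} [NormedAddCommGroup V] [NormedSpace ℝ V] (b : AffineBasis ι ℝ V)

theorem sum_lt_one_of_interior_coordGE_nonempty [Fintype ι] [Nontrivial V] {a : ι → ℝ}
    (h : (interior (b.coordGE a)).Nonempty) : ∑ i, a i < 1 := by
  by_contra! hsum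
  rcases (b.coordGE_subsingleton hsum).eq_empty_or_singleton with he | ⟨x, hx⟩
  · simp [he] at h
  · simp [hx] at h

variable [FiniteDimensional ℝ V]

theorem exists_subset_coordGE_of_isCompact {K : Set V} (hK : IsCompact K) (hKne : K.Nonempty) :
    ∃ a : ι → ℝ, K ⊆ b.coordGE a ∧ ∀ i, ∃ x ∈ K, b.coord i x = a i := by
  choose x hxK hx using fun i =>
    hK.exists_isMinOn hKne (b.coord i).continuous_of_finiteDimensional.continuousOn
  exact ⟨fun i => b.coord i (x i), fun y hy i => hx i hy, fun i => ⟨x i, hxK i, rfl⟩⟩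

theorem exists_eq_coordGE_of_add_eq_coordGE_zero {K L : Set V}
    (hK : IsCompact K) (hKc : Convex ℝ K) (hKne : K.Nonempty)
    (hL : IsCompact L) (hLc : Convex ℝ L) (hLne : L.Nonempty) (hKL : K + L = b.coordGE 0) :
    ∃ a a' : ι → ℝ, K = b.coordGE a ∧ L = b.coordGE a' := by
  obtain ⟨a, hKa, ha⟩ := b.exists_subset_coordGE_of_isCompact hK hKne
  obtain ⟨a', hLa', ha'⟩ := b.exists_subset_coordGE_of_isCompact hL hLne
  have hsum : b.coordGE a + b.coordGE a' ⊆ K + L := by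
    refine hKL ▸ b.coordGE_add_coordGE_subset fun i => ?_
    obtain ⟨x, hx, hxi⟩ := ha i
    obtain ⟨y, hy, hyi⟩ := ha' i
    have := (hKL ▸ add_mem_add hx hy : x + y ∈ b.coordGE 0) i
    rw [coord_add, hxi, hyi] at this
    simp only [Pi.zero_apply] at this ⊢
    linarith
  refine ⟨a, a', hKa.antisymm ?_, hLa'.antisymm ?_⟩
  · exact subset_of_add_subset_add_right hK.isClosed hKc hL hLne
      ((add_subset_add_left hLa').trans hsum)
  · refine subset_of_add_subset_add_right hL.isClosed hLc hK hKne ?_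
    rw [add_comm, add_comm L]
    exact (add_subset_add_right hKa).trans hsum

end Normed

end AffineBasis

theorem IsSimplex.image_add_smul {n : ℕ} {S : Set (EuclideanSpace ℝ (Fin n))}
    (hS : IsSimplex n S) (z : EuclideanSpace ℝ (Fin n)) {l : ℝ} (hl : l ≠ 0) :
    IsSimplex n ((fun x => z + l • x) '' S) := by
  obtain ⟨p, hp, rfl⟩ := hS
  let f : EuclideanSpace ℝ (Fin n) →ᵃ[ℝ] EuclideanSpace ℝ (Fin n) :=
    AffineMap.const ℝ _ z + l • AffineMap.id ℝ _
  have hf : ⇑f = fun x => z + l • x := rfl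
  refine ⟨f ∘ p, hp.map' f ?_, ?_⟩
  · rw [hf]
    exact (add_right_injective z).comp (smul_right_injective _ hl)
  · rw [← hf, f.image_convexHull, range_comp]

theorem homothetic_image_image {n : ℕ} (S : Set (EuclideanSpace ℝ (Fin n)))
    (z₁ z₂ : EuclideanSpace ℝ (Fin n)) {l₁ l₂ : ℝ} (hl₁ : 0 < l₁) (hl₂ : 0 < l₂) :
    Homothetic n ((fun x => z₁ + l₁ • x) '' S) ((fun x => z₂ + l₂ • x) '' S) := by
  refine ⟨z₂ - (l₂ / l₁) • z₁, l₂ / l₁, div_pos hl₂ hl₁, ?_⟩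
  rw [image_image]
  refine image_congr fun x _ => ?_
  rw [smul_add, smul_smul, div_mul_cancel₀ _ hl₁.ne']
  abel

theorem IsSimplex.exists_affineBasis {n : ℕ} {S : Set (EuclideanSpace ℝ (Fin n))}
    (hS : IsSimplex n S) : ∃ b : AffineBasis (Fin (n + 1)) ℝ (EuclideanSpace ℝ (Fin n)),
      S = b.coordGE 0 := by
  obtain ⟨p, hp, rfl⟩ := hS
  have hspan : affineSpan ℝ (range p) = ⊤ :=
    hp.affineSpan_eq_top_iff_card_eq_finrank_add_one.mpr (by simp)
  exact ⟨⟨p, hp, hspan⟩, AffineBasis.convexHull_eq_coordGE_zero ⟨p, hp, hspan⟩⟩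

theorem simplex_sum_decomposition (n : ℕ) (K L : Set (EuclideanSpace ℝ (Fin n)))
    (hK : IsCompact K) (hKc : Convex ℝ K) (hKi : (interior K).Nonempty)
    (hL : IsCompact L) (hLc : Convex ℝ L) (hLi : (interior L).Nonempty)
    (hKL : IsSimplex n (K + L)) :
    IsSimplex n K ∧ IsSimplex n L ∧ Homothetic n K L := by
  have hKne := hKi.mono interior_subset
  have hLne := hLi.mono interior_subset
  rcases n.eq_zero_or_pos with rfl | hn
  · rw [(hKne.add hLne).eq_univ] at hKL
    rw [hKne.eq_univ, hLne.eq_univ]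
    exact ⟨hKL, hKL, 0, 1, one_pos, by simp⟩
  have : NeZero n := ⟨hn.ne'⟩
  obtain ⟨b, hb⟩ := hKL.exists_affineBasis
  obtain ⟨a, a', rfl, rfl⟩ :=
    b.exists_eq_coordGE_of_add_eq_coordGE_zero hK hKc hKne hL hLc hLne hb
  have hα := b.sum_lt_one_of_interior_coordGE_nonempty hKi
  have hβ := b.sum_lt_one_of_interior_coordGE_nonempty hLi
  obtain ⟨t, ht⟩ := b.exists_coordGE_eq_image hα
  obtain ⟨t', ht'⟩ := b.exists_coordGE_eq_image hβ
  have hS : IsSimplex n (b.coordGE 0) := hb ▸ hKL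
  rw [ht, ht']
  exact ⟨hS.image_add_smul t (sub_pos.mpr hα).ne', hS.image_add_smul t' (sub_pos.mpr hβ).ne',
    homothetic_image_image _ t t' (sub_pos.mpr hα) (sub_pos.mpr hβ)⟩
end
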